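/- arXiv:2409.14325 — 9 statements merged into one kernel-verified Lean document; each statement's English description precedes it below -/
import Mathlib

section
/- Let f : 2^N → ℝ be a non-negative submodular set function on a finite set N, and let y ∈ [0,1]^(2^N). Then F̄(marg(y)) ≥ F(y), where F̄ is the standard multilinear extension of f and F is the extended multilinear extension of f. -/
open scoped Classical

/-- A matroid on a finite ground set, given by its independent sets. -/
structure FinMatroid (α : Type*) [Fintype α] [DecidableEq α] where
  Indep : Finset α → Prop
  indep_empty : Indep ∅
  indep_subset : ∀ ⦃S T : Finset α⦄, Indep T → S ⊆ T → Indep S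
  indep_exchange : ∀ ⦃S T : Finset α⦄, Indep S → Indep T → S.card < T.card →
    ∃ u ∈ T \ S, Indep (insert u S)

variable {α : Type*} [Fintype α] [DecidableEq α]

/-- The rank of a set `A`: the maximum size of an independent subset of `A`. -/
noncomputable def FinMatroid.rank (M : FinMatroid α) (A : Finset α) : ℕ :=
  (A.powerset.filter fun S => M.Indep S).sup Finset.card

/-- A base of a matroid: an inclusion-wise maximal independent set. -/
def FinMatroid.IsBase (M : FinMatroid α) (B : Finset α) : Prop :=
  M.Indep B ∧ ∀ T : Finset α, M.Indep T → B ⊆ T → T = B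

/-- The extended multilinear extension of a set function `f`, evaluated at a
vector `y` with one coordinate for each subset of the ground set. -/
noncomputable def extMulti (f : Finset α → ℝ) (y : Finset α → ℝ) : ℝ :=
  ∑ J : Finset (Finset α), f (J.sup id) * ((∏ S ∈ J, y S) * ∏ S ∈ Jᶜ, (1 - y S))

/-- The standard multilinear extension of a set function `f`. -/
noncomputable def stdMulti (f : Finset α → ℝ) (x : α → ℝ) : ℝ :=
  ∑ S : Finset α, f S * ((∏ u ∈ S, x u) * ∏ u ∈ Sᶜ, (1 - x u))

/-- The marginal vector of `y`: `marg y u = 1 - ∏_{S ∋ u} (1 - y S)`. -/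
noncomputable def marg (y : Finset α → ℝ) (u : α) : ℝ :=
  1 - ∏ S ∈ Finset.univ.filter (fun S : Finset α => u ∈ S), (1 - y S)

/-- The characteristic vector of the coordinate indexed by the set `A`. -/
def chi (A : Finset α) : Finset α → ℝ := fun S => if S = A then 1 else 0

/-- The coordinate-wise probabilistic sum of two vectors. -/
def psum {ι : Type*} (a b : ι → ℝ) : ι → ℝ := fun i => 1 - (1 - a i) * (1 - b i)

/-- Membership of `x` in the matroid polytope `P(M)`. -/
def inMatroidPolytope (M : FinMatroid α) (x : α → ℝ) : Prop :=
  (∀ u, 0 ≤ x u) ∧ ∀ A : Finset α, ∑ u ∈ A, x u ≤ (M.rank A : ℝ)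

/-! ### Auxiliary machinery for the proof -/

/-- Restricted multilinear extension: sum over subsets of `S`. -/
noncomputable def myPhi (g : Finset α → ℝ) (x : α → ℝ) (S : Finset α) : ℝ :=
  ∑ B ∈ S.powerset, g B * ((∏ u ∈ B, x u) * ∏ u ∈ S \ B, (1 - x u))

def mySubmod (g : Finset α → ℝ) : Prop :=
  ∀ A B : Finset α, g (A ∪ B) + g (A ∩ B) ≤ g A + g B

lemma myPhi_congr_fun (g : Finset α → ℝ) {x x' : α → ℝ} {S : Finset α}
    (h : ∀ u ∈ S, x u = x' u) : myPhi g x S = myPhi g x' S := by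
  refine Finset.sum_congr rfl fun B hB => ?_
  rw [Finset.mem_powerset] at hB
  have h1 : ∏ u ∈ B, x u = ∏ u ∈ B, x' u :=
    Finset.prod_congr rfl fun u hu => h u (hB hu)
  have h2 : ∏ u ∈ S \ B, (1 - x u) = ∏ u ∈ S \ B, (1 - x' u) :=
    Finset.prod_congr rfl fun u hu => by rw [h u (Finset.mem_sdiff.mp hu).1]
  rw [h1, h2]

lemma myPhi_empty (g : Finset α → ℝ) (x : α → ℝ) : myPhi g x ∅ = g ∅ := by
  simp [myPhi]

lemma myPhi_zero (g : Finset α → ℝ) (S : Finset α) :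
    myPhi g (fun _ => (0 : ℝ)) S = g ∅ := by
  rw [myPhi, Finset.sum_eq_single ∅]
  · simp
  · intro B hB hBne
    obtain ⟨u, hu⟩ := Finset.nonempty_iff_ne_empty.mpr hBne
    rw [Finset.prod_eq_zero hu rfl]
    ring
  · intro h
    exact absurd (Finset.empty_mem_powerset S) h

lemma myPhi_insert (g : Finset α → ℝ) (x : α → ℝ) {u : α} {S : Finset α} (hu : u ∉ S) :
    myPhi g x (insert u S) =
      (1 - x u) * myPhi g x S + x u * myPhi (fun B => g (insert u B)) x S := by
  rw [myPhi, Finset.sum_powerset_insert hu, myPhi, myPhi, Finset.mul_sum, Finset.mul_sum]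
  congr 1
  · refine Finset.sum_congr rfl fun B hB => ?_
    rw [Finset.mem_powerset] at hB
    have huB : u ∉ B := fun h => hu (hB h)
    rw [Finset.insert_sdiff_of_notMem _ huB,
      Finset.prod_insert (fun h => hu (Finset.mem_sdiff.mp h).1)]
    ring
  · refine Finset.sum_congr rfl fun B hB => ?_
    rw [Finset.mem_powerset] at hB
    have huB : u ∉ B := fun h => hu (hB h)
    have hsd : insert u S \ insert u B = S \ B := by
      ext v
      simp only [Finset.mem_sdiff, Finset.mem_insert, not_or]
      constructor
      · rintro ⟨hv | hv, hne, hnb⟩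
        · exact absurd hv hne
        · exact ⟨hv, hnb⟩
      · rintro ⟨hv, hnb⟩
        exact ⟨Or.inr hv, fun h => hu (h ▸ hv), hnb⟩
    rw [hsd, Finset.prod_insert huB]
    ring

lemma mySubmod_insert {g : Finset α → ℝ} (hg : mySubmod g) (u : α) :
    mySubmod (fun B => g (insert u B)) := by
  intro A B
  have h := hg (insert u A) (insert u B)
  have h1 : insert u A ∪ insert u B = insert u (A ∪ B) := by
    ext v; simp [Finset.mem_insert, Finset.mem_union]; try tauto
  have h2 : insert u A ∩ insert u B = insert u (A ∩ B) := by
    ext v; simp [Finset.mem_insert, Finset.mem_inter]; try tauto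
  rw [h1, h2] at h
  simpa using h

lemma mySubmod_union {g : Finset α → ℝ} (hg : mySubmod g) (C : Finset α) :
    mySubmod (fun B => g (B ∪ C)) := by
  intro A B
  have h := hg (A ∪ C) (B ∪ C)
  have h1 : (A ∪ C) ∪ (B ∪ C) = (A ∪ B) ∪ C := by
    ext v; simp [Finset.mem_union]; tauto
  have h2 : (A ∪ C) ∩ (B ∪ C) = (A ∩ B) ∪ C := by
    ext v; simp [Finset.mem_union, Finset.mem_inter]; tauto
  rw [h1, h2] at h
  simpa using h

/-- Concavity step: mixing a full set `S₀` with probability `p` is dominated by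
independently rounding each element of `S₀` with probability `p`. -/
lemma myL2 (p : ℝ) (hp0 : 0 ≤ p) (hp1 : p ≤ 1)
    (x : α → ℝ) (hx : ∀ u, 0 ≤ x u ∧ x u ≤ 1) (S : Finset α) :
    ∀ (g : Finset α → ℝ), mySubmod g → ∀ S₀ : Finset α, S₀ ⊆ S →
    (1 - p) * myPhi g x S + p * myPhi (fun B => g (B ∪ S₀)) x S ≤
      myPhi g (fun u => if u ∈ S₀ then x u + p * (1 - x u) else x u) S := by
  induction S using Finset.induction with
  | empty =>
    intro g hg S₀ hS₀
    rw [Finset.subset_empty.mp hS₀]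
    simp only [myPhi_empty, Finset.empty_union]
    nlinarith [le_refl (g ∅)]
  | @insert u S' hu ih =>
    intro g hg S₀ hS₀
    have hq0 := (hx u).1
    have hq1 := (hx u).2
    by_cases huS₀ : u ∈ S₀
    · -- u ∈ S₀
      set S₀' := S₀.erase u with hS₀'def
      have hins : insert u S₀' = S₀ := Finset.insert_erase huS₀
      have huS₀' : u ∉ S₀' := Finset.notMem_erase u S₀
      have hsub' : S₀' ⊆ S' := by
        intro v hv
        have hvu : v ≠ u := (Finset.mem_erase.mp hv).1
        have := hS₀ (Finset.mem_erase.mp hv).2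
        rcases Finset.mem_insert.mp this with h | h
        · exact absurd h hvu
        · exact h
      rw [myPhi_insert _ _ hu, myPhi_insert _ _ hu, myPhi_insert _ _ hu]
      simp only [if_pos huS₀]
      -- rewrite the two union-functions into a common form
      have hC : (fun B => g (B ∪ S₀)) = (fun B => g (insert u (B ∪ S₀'))) := by
        funext B
        rw [← hins, Finset.union_insert]
      have hD : (fun B => g (insert u B ∪ S₀)) = (fun B => g (insert u (B ∪ S₀'))) := by
        funext B
        rw [← hins]
        congr 1
        ext v
        simp [Finset.mem_insert, Finset.mem_union]
        try tauto
      rw [hC, hD]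
      -- rewrite the x''-function on S' to use S₀'
      have hAB : ∀ h : Finset α → ℝ,
          myPhi h (fun v => if v ∈ S₀ then x v + p * (1 - x v) else x v) S' =
          myPhi h (fun v => if v ∈ S₀' then x v + p * (1 - x v) else x v) S' := by
        intro h
        apply myPhi_congr_fun
        intro v hv
        have hvu : v ≠ u := fun e => hu (e ▸ hv)
        by_cases hvS : v ∈ S₀'
        · rw [if_pos hvS, if_pos ((Finset.mem_erase.mp hvS).2)]
        · have hvS2 : v ∉ S₀ := fun h' => hvS (Finset.mem_erase.mpr ⟨hvu, h'⟩)
          rw [if_neg hvS2, if_neg hvS]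
      rw [hAB g, hAB (fun B => g (insert u B))]
      have I0 := ih g hg S₀' hsub'
      have I1 := ih (fun B => g (insert u B)) (mySubmod_insert hg u) S₀' hsub'
      -- key submodularity comparison
      have key : myPhi g x S' + myPhi (fun B => g (insert u (B ∪ S₀'))) x S' ≤
          myPhi (fun B => g (insert u B)) x S' + myPhi (fun B => g (B ∪ S₀')) x S' := by
        rw [myPhi, myPhi, myPhi, myPhi, ← Finset.sum_add_distrib, ← Finset.sum_add_distrib]
        refine Finset.sum_le_sum fun B hB => ?_
        rw [Finset.mem_powerset] at hB
        have huB : u ∉ B := fun h => hu (hB h)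
        have hw : 0 ≤ (∏ v ∈ B, x v) * ∏ v ∈ S' \ B, (1 - x v) := by
          apply mul_nonneg
          · exact Finset.prod_nonneg fun v _ => (hx v).1
          · exact Finset.prod_nonneg fun v hv => by linarith [(hx v).2]
        have hsubm := hg (insert u B) (B ∪ S₀')
        have h1 : insert u B ∪ (B ∪ S₀') = insert u (B ∪ S₀') := by
          ext v; simp [Finset.mem_insert, Finset.mem_union]; try tauto
        have h2 : insert u B ∩ (B ∪ S₀') = B := by
          ext v
          simp only [Finset.mem_inter, Finset.mem_insert, Finset.mem_union]
          constructor
          · rintro ⟨rfl | hvB, hvBS⟩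
            · rcases hvBS with h | h
              · exact absurd h huB
              · exact absurd h huS₀'
            · exact hvB
          · intro h
            exact ⟨Or.inr h, Or.inl h⟩
        rw [h1, h2] at hsubm
        nlinarith [mul_le_mul_of_nonneg_right hsubm hw]
      have hq'0 : (0:ℝ) ≤ x u + p * (1 - x u) := by nlinarith
      have hq'1 : x u + p * (1 - x u) ≤ 1 := by nlinarith
      have H0 := mul_le_mul_of_nonneg_left I0 (by linarith : (0:ℝ) ≤ 1 - (x u + p * (1 - x u)))
      have H1 := mul_le_mul_of_nonneg_left I1 hq'0
      nlinarith [H0, H1, key, mul_nonneg (mul_nonneg (mul_nonneg hp0 (by linarith : (0:ℝ) ≤ 1 - p)) (by linarith : (0:ℝ) ≤ 1 - x u)) (by linarith [key] : (0:ℝ) ≤ myPhi (fun B => g (insert u B)) x S' + myPhi (fun B => g (B ∪ S₀')) x S' - myPhi g x S' - myPhi (fun B => g (insert u (B ∪ S₀'))) x S')]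
    · -- u ∉ S₀
      have hsub' : S₀ ⊆ S' := by
        intro v hv
        rcases Finset.mem_insert.mp (hS₀ hv) with h | h
        · exact absurd (h ▸ hv) huS₀
        · exact h
      rw [myPhi_insert _ _ hu, myPhi_insert _ _ hu, myPhi_insert _ _ hu]
      simp only [if_neg huS₀]
      have hD : (fun B => g (insert u B ∪ S₀)) = (fun B => g (insert u (B ∪ S₀))) := by
        funext B
        rw [Finset.insert_union]
      rw [hD]
      have I0 := ih g hg S₀ hsub'
      have I1 := ih (fun B => g (insert u B)) (mySubmod_insert hg u) S₀ hsub'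
      have H0 := mul_le_mul_of_nonneg_left I0 (by linarith : (0:ℝ) ≤ 1 - x u)
      have H1 := mul_le_mul_of_nonneg_left I1 hq0
      nlinarith [H0, H1]

/-- Main hybrid induction. -/
lemma myHybrid (f : Finset α → ℝ) (hf : mySubmod f)
    (y : Finset α → ℝ) (hy : ∀ S, 0 ≤ y S ∧ y S ≤ 1)
    (K : Finset (Finset α)) :
    ∀ (x : α → ℝ), (∀ u, 0 ≤ x u ∧ x u ≤ 1) →
    (∑ J ∈ K.powerset, ((∏ S ∈ J, y S) * ∏ S ∈ K \ J, (1 - y S)) *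
        myPhi (fun T => f (T ∪ J.sup id)) x Finset.univ)
      ≤ myPhi f
          (fun u => 1 - (1 - x u) * ∏ S ∈ K.filter (fun S => u ∈ S), (1 - y S))
          Finset.univ := by
  induction K using Finset.induction with
  | empty =>
    intro x hx
    have h1 : (fun T => f (T ∪ (∅ : Finset (Finset α)).sup id)) = f := by
      funext T; simp
    have h2 : myPhi f
        (fun u => 1 - (1 - x u) *
          ∏ S ∈ (∅ : Finset (Finset α)).filter (fun S => u ∈ S), (1 - y S))
        Finset.univ = myPhi f x Finset.univ := by
      apply myPhi_congr_fun
      intro u _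
      simp
    rw [h2]
    simp [h1]
  | @insert S₀ K' hS₀K ih =>
    intro x hx
    have hp := hy S₀
    have hx' : ∀ u, 0 ≤ (if u ∈ S₀ then x u + y S₀ * (1 - x u) else x u) ∧
        (if u ∈ S₀ then x u + y S₀ * (1 - x u) else x u) ≤ 1 := by
      intro u
      by_cases h : u ∈ S₀
      · rw [if_pos h]
        constructor <;> nlinarith [(hx u).1, (hx u).2, hp.1, hp.2]
      · rw [if_neg h]
        exact hx u
    rw [Finset.sum_powerset_insert hS₀K]
    have step1 : ∀ J ∈ K'.powerset,
        ((∏ S ∈ J, y S) * ∏ S ∈ insert S₀ K' \ J, (1 - y S)) *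
          myPhi (fun T => f (T ∪ J.sup id)) x Finset.univ =
        (1 - y S₀) * (((∏ S ∈ J, y S) * ∏ S ∈ K' \ J, (1 - y S)) *
          myPhi (fun T => f (T ∪ J.sup id)) x Finset.univ) := by
      intro J hJ
      rw [Finset.mem_powerset] at hJ
      have hS₀J : S₀ ∉ J := fun h => hS₀K (hJ h)
      rw [Finset.insert_sdiff_of_notMem _ hS₀J,
        Finset.prod_insert (fun h => hS₀K (Finset.mem_sdiff.mp h).1)]
      ring
    have step2 : ∀ J ∈ K'.powerset,
        ((∏ S ∈ insert S₀ J, y S) * ∏ S ∈ insert S₀ K' \ insert S₀ J, (1 - y S)) *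
          myPhi (fun T => f (T ∪ (insert S₀ J).sup id)) x Finset.univ =
        y S₀ * (((∏ S ∈ J, y S) * ∏ S ∈ K' \ J, (1 - y S)) *
          myPhi (fun T => f ((T ∪ J.sup id) ∪ S₀)) x Finset.univ) := by
      intro J hJ
      rw [Finset.mem_powerset] at hJ
      have hS₀J : S₀ ∉ J := fun h => hS₀K (hJ h)
      have hsd : insert S₀ K' \ insert S₀ J = K' \ J := by
        ext T
        simp only [Finset.mem_sdiff, Finset.mem_insert, not_or]
        constructor
        · rintro ⟨hT | hT, hne, hnJ⟩
          · exact absurd hT hne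
          · exact ⟨hT, hnJ⟩
        · rintro ⟨hT, hnJ⟩
          exact ⟨Or.inr hT, fun h => hS₀K (h ▸ hT), hnJ⟩
      have hfun : (fun T => f (T ∪ (insert S₀ J).sup id)) =
          (fun T => f ((T ∪ J.sup id) ∪ S₀)) := by
        funext T
        congr 1
        rw [Finset.sup_insert]
        show T ∪ (S₀ ⊔ J.sup id) = (T ∪ J.sup id) ∪ S₀
        rw [Finset.sup_eq_union, Finset.union_comm S₀, ← Finset.union_assoc]
      rw [hsd, hfun, Finset.prod_insert hS₀J]
      ring
    rw [Finset.sum_congr rfl step1, Finset.sum_congr rfl step2]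
    have combine : ∑ J ∈ K'.powerset, (1 - y S₀) * (((∏ S ∈ J, y S) * ∏ S ∈ K' \ J, (1 - y S)) *
          myPhi (fun T => f (T ∪ J.sup id)) x Finset.univ) +
        ∑ J ∈ K'.powerset, y S₀ * (((∏ S ∈ J, y S) * ∏ S ∈ K' \ J, (1 - y S)) *
          myPhi (fun T => f ((T ∪ J.sup id) ∪ S₀)) x Finset.univ) ≤
        ∑ J ∈ K'.powerset, ((∏ S ∈ J, y S) * ∏ S ∈ K' \ J, (1 - y S)) *
          myPhi (fun T => f (T ∪ J.sup id))
            (fun u => if u ∈ S₀ then x u + y S₀ * (1 - x u) else x u) Finset.univ := by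
      rw [← Finset.sum_add_distrib]
      refine Finset.sum_le_sum fun J hJ => ?_
      have hw : 0 ≤ (∏ S ∈ J, y S) * ∏ S ∈ K' \ J, (1 - y S) := by
        apply mul_nonneg
        · exact Finset.prod_nonneg fun S _ => (hy S).1
        · exact Finset.prod_nonneg fun S _ => by linarith [(hy S).2]
      have hL2 := myL2 (y S₀) hp.1 hp.2 x hx Finset.univ
        (fun T => f (T ∪ J.sup id)) (mySubmod_union hf _) S₀ (Finset.subset_univ S₀)
      have hfix : (fun B => f ((B ∪ S₀) ∪ J.sup id)) = (fun T => f ((T ∪ J.sup id) ∪ S₀)) := by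
        funext B
        rw [Finset.union_right_comm]
      rw [hfix] at hL2
      calc (1 - y S₀) * (((∏ S ∈ J, y S) * ∏ S ∈ K' \ J, (1 - y S)) *
              myPhi (fun T => f (T ∪ J.sup id)) x Finset.univ) +
            y S₀ * (((∏ S ∈ J, y S) * ∏ S ∈ K' \ J, (1 - y S)) *
              myPhi (fun T => f ((T ∪ J.sup id) ∪ S₀)) x Finset.univ)
          = ((∏ S ∈ J, y S) * ∏ S ∈ K' \ J, (1 - y S)) *
              ((1 - y S₀) * myPhi (fun T => f (T ∪ J.sup id)) x Finset.univ +
                y S₀ * myPhi (fun T => f ((T ∪ J.sup id) ∪ S₀)) x Finset.univ) := by ring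
        _ ≤ _ := mul_le_mul_of_nonneg_left hL2 hw
    refine le_trans combine (le_trans (ih _ hx') (le_of_eq ?_))
    apply myPhi_congr_fun
    intro u _
    by_cases h : u ∈ S₀
    · rw [if_pos h]
      rw [Finset.filter_insert]
      rw [if_pos h]
      have hS₀f : S₀ ∉ K'.filter (fun S => u ∈ S) := fun hmem => hS₀K (Finset.mem_filter.mp hmem).1
      rw [Finset.prod_insert hS₀f]
      ring
    · rw [if_neg h]
      rw [Finset.filter_insert]
      rw [if_neg h]

theorem marg_multilinear_ge (f : Finset α → ℝ)
    (hf_nonneg : ∀ S, 0 ≤ f S)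
    (hf_submod : ∀ S T : Finset α, f (S ∪ T) + f (S ∩ T) ≤ f S + f T)
    (y : Finset α → ℝ) (hy : ∀ S, 0 ≤ y S ∧ y S ≤ 1) :
    extMulti f y ≤ stdMulti f (marg y) := by
  have hf : mySubmod f := hf_submod
  have hx0 : ∀ u : α, 0 ≤ (0:ℝ) ∧ (0:ℝ) ≤ 1 := fun u => ⟨le_refl _, zero_le_one⟩
  have main := myHybrid f hf y hy Finset.univ (fun _ => (0:ℝ)) hx0
  have hL : extMulti f y =
      ∑ J ∈ (Finset.univ : Finset (Finset α)).powerset,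
        ((∏ S ∈ J, y S) * ∏ S ∈ (Finset.univ : Finset (Finset α)) \ J, (1 - y S)) *
          myPhi (fun T => f (T ∪ J.sup id)) (fun _ => (0:ℝ)) Finset.univ := by
    rw [extMulti, Finset.powerset_univ]
    refine Finset.sum_congr rfl fun J _ => ?_
    rw [myPhi_zero, Finset.empty_union, ← Finset.compl_eq_univ_sdiff]
    ring
  have hR : myPhi f
      (fun u => 1 - (1 - (0:ℝ)) *
        ∏ S ∈ (Finset.univ : Finset (Finset α)).filter (fun S => u ∈ S), (1 - y S))
      Finset.univ = stdMulti f (marg y) := by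
    rw [stdMulti]
    rw [myPhi, Finset.powerset_univ]
    refine Finset.sum_congr rfl fun B _ => ?_
    rw [← Finset.compl_eq_univ_sdiff]
    congr 1
    congr 1
    · exact Finset.prod_congr rfl fun u _ => by rw [marg]; ring
    · exact Finset.prod_congr rfl fun u _ => by rw [marg]; ring
  rw [hL, ← hR]
  exact main
end

section
/- Let f : 2^N → ℝ be a non-negative submodular set function on a finite set N, and let y ∈ [0,1]^(2^N). Then the set function g_y : 2^N → ℝ defined by g_y(A) = F(χ_A ∨ y) is non-negative and submodular. Moreover, if f is monotone, then g_y is monotone. -/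
/-!
Once the coordinate indexed by `A` is raised to `1`, the set `A` is always part of the sampled
union, so `g_y(A) = F_{f_A}(y)` with `f_A(S) = f(A ∪ S)`. For `y ∈ [0,1]^(2^N)` the extension
`F_h(y)` is additive and monotone in `h`, and for every fixed `S` the function `A ↦ f(A ∪ S)`
inherits non-negativity, submodularity and monotonicity from `f`.
-/

open scoped Classical

variable {α : Type*} [Fintype α] [DecidableEq α]

lemma Finset.sum_univ_finset_eq_sum_powerset_compl_singleton {β M : Type*} [Fintype β]
    [DecidableEq β] [AddCommMonoid M] (a : β) (h : Finset β → M) :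
    ∑ s, h s = ∑ s ∈ ({a}ᶜ : Finset β).powerset, (h s + h (insert a s)) := by
  have ha : a ∉ ({a}ᶜ : Finset β) := by simp
  rw [← Finset.powerset_univ, ← Finset.insert_compl_self a, Finset.sum_powerset_insert ha,
    Finset.sum_add_distrib]

/-- The probability that exactly the coordinates in `J` are sampled when each `S` is sampled
independently with probability `y S`. -/
def extWeight (y : Finset α → ℝ) (J : Finset (Finset α)) : ℝ :=
  (∏ S ∈ J, y S) * ∏ S ∈ Jᶜ, (1 - y S)

lemma extMulti_eq_sum_extWeight (f y : Finset α → ℝ) :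
    extMulti f y = ∑ J, f (J.sup id) * extWeight y J := rfl

lemma extWeight_nonneg {y : Finset α → ℝ} (hy : ∀ S, 0 ≤ y S ∧ y S ≤ 1)
    (J : Finset (Finset α)) : 0 ≤ extWeight y J :=
  mul_nonneg (Finset.prod_nonneg fun S _ => (hy S).1)
    (Finset.prod_nonneg fun S _ => sub_nonneg.mpr (hy S).2)

lemma extWeight_update_one_of_notMem (y : Finset α → ℝ) {A : Finset α}
    {J : Finset (Finset α)} (hA : A ∉ J) : extWeight (Function.update y A 1) J = 0 := by
  refine mul_eq_zero_of_right _ (Finset.prod_eq_zero (Finset.mem_compl.mpr hA) ?_)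
  simp

lemma extWeight_update_one_insert (y : Finset α → ℝ) {A : Finset α}
    {J : Finset (Finset α)} (hA : A ∉ J) :
    extWeight (Function.update y A 1) (insert A J) = extWeight y J + extWeight y (insert A J) := by
  have hAc : A ∈ Jᶜ := Finset.mem_compl.mpr hA
  have hJ : ∀ S ∈ J, Function.update y A 1 S = y S := fun S hS =>
    Function.update_of_ne (ne_of_mem_of_not_mem hS hA) _ _
  have hJc : ∀ S ∈ Jᶜ.erase A, Function.update y A 1 S = y S := fun S hS =>
    Function.update_of_ne (Finset.ne_of_mem_erase hS) _ _
  simp only [extWeight, Finset.compl_insert, Finset.prod_insert hA,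
    Finset.prod_congr rfl hJ, Finset.prod_congr rfl fun S hS => congrArg (1 - ·) (hJc S hS),
    ← Finset.mul_prod_erase _ _ hAc, Function.update_self]
  ring

lemma extMulti_update_one (f y : Finset α → ℝ) (A : Finset α) :
    extMulti f (Function.update y A 1) = extMulti (fun S => f (A ∪ S)) y := by
  simp only [extMulti_eq_sum_extWeight]
  rw [Finset.sum_univ_finset_eq_sum_powerset_compl_singleton A,
    Finset.sum_univ_finset_eq_sum_powerset_compl_singleton A]
  refine Finset.sum_congr rfl fun J hJ => ?_
  have hA : A ∉ J := fun h => by simpa using Finset.mem_powerset.mp hJ h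
  rw [extWeight_update_one_of_notMem y hA, extWeight_update_one_insert y hA,
    Finset.sup_insert, id, Finset.sup_eq_union, ← Finset.union_assoc, Finset.union_self]
  ring

lemma extMulti_add (f g y : Finset α → ℝ) :
    extMulti (f + g) y = extMulti f y + extMulti g y := by
  simp only [extMulti_eq_sum_extWeight, Pi.add_apply, add_mul, Finset.sum_add_distrib]

lemma extMulti_nonneg {f y : Finset α → ℝ} (hf : ∀ S, 0 ≤ f S)
    (hy : ∀ S, 0 ≤ y S ∧ y S ≤ 1) : 0 ≤ extMulti f y :=
  Finset.sum_nonneg fun J _ => mul_nonneg (hf _) (extWeight_nonneg hy J)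

lemma extMulti_mono {f g y : Finset α → ℝ} (hfg : ∀ S, f S ≤ g S)
    (hy : ∀ S, 0 ≤ y S ∧ y S ≤ 1) : extMulti f y ≤ extMulti g y :=
  Finset.sum_le_sum fun J _ => mul_le_mul_of_nonneg_right (hfg _) (extWeight_nonneg hy J)

lemma max_chi_eq_update {β : Type*} [DecidableEq β] {y : Finset β → ℝ}
    (hy : ∀ S, 0 ≤ y S ∧ y S ≤ 1) (A : Finset β) :
    (fun S => max (chi A S) (y S)) = Function.update y A 1 := by
  funext S
  by_cases hS : S = A
  · subst hS; simp [chi, (hy S).2]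
  · simp [chi, hS, (hy S).1]

theorem gvec_nonneg_submodular_monotone (f : Finset α → ℝ)
    (hf_nonneg : ∀ S, 0 ≤ f S)
    (hf_submod : ∀ S T : Finset α, f (S ∪ T) + f (S ∩ T) ≤ f S + f T)
    (y : Finset α → ℝ) (hy : ∀ S, 0 ≤ y S ∧ y S ≤ 1) :
    (∀ A : Finset α, 0 ≤ extMulti f (fun S => max (chi A S) (y S))) ∧
    (∀ A B : Finset α,
        extMulti f (fun S => max (chi (A ∪ B) S) (y S)) +
          extMulti f (fun S => max (chi (A ∩ B) S) (y S)) ≤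
        extMulti f (fun S => max (chi A S) (y S)) +
          extMulti f (fun S => max (chi B S) (y S))) ∧
    ((∀ S T : Finset α, S ⊆ T → f S ≤ f T) →
      ∀ A B : Finset α, A ⊆ B →
        extMulti f (fun S => max (chi A S) (y S)) ≤
          extMulti f (fun S => max (chi B S) (y S))) := by
  have hg : ∀ A, extMulti f (fun S => max (chi A S) (y S)) = extMulti (fun S => f (A ∪ S)) y :=
    fun A => by rw [max_chi_eq_update hy, extMulti_update_one]
  simp only [hg]
  refine ⟨fun A => extMulti_nonneg (fun S => hf_nonneg _) hy, fun A B => ?_,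
    fun hf_mono A B hAB =>
      extMulti_mono (fun S => hf_mono _ _ (Finset.union_subset_union_left hAB)) hy⟩
  rw [← extMulti_add, ← extMulti_add]
  refine extMulti_mono (fun S => ?_) hy
  simpa only [Pi.add_apply, ← Finset.union_union_distrib_right, ← Finset.inter_union_distrib_right]
    using hf_submod (A ∪ S) (B ∪ S)
end

section
/- Let f : 2^N → ℝ be an arbitrary set function on a finite set N with extended multilinear extension F, and let y, z ∈ [0,1]^(2^N). Then F(y ⊕ z) = Σ_{J ⊆ 2^N} F(y ∨ Σ_{S ∈ J} χ_S) · ∏_{S ∈ J} z_S · ∏_{S ∈ 2^N ∖ J} (1 − z_S), where the sum ranges over all collections J of subsets of N. -/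
/-!
`F(y)` is the expectation of `f` on the union of a random collection `R(y)` that contains
each `S` independently with probability `y S`. The collection `R(y ⊕ z)` has the law of
`R(y) ∪ R(z)` for independent `R(y)`, `R(z)`; conditioning on `R(z) = J` forces every member
of `J` into the collection, which is sampling `R` at `y ∨ Σ_{S ∈ J} χ_S`.
-/

open scoped Classical

variable {α : Type*} [Fintype α] [DecidableEq α]

namespace Finset

variable {ι M : Type*} [Fintype ι] [DecidableEq ι] [CommMonoid M]

theorem prod_ite_mem_eq_prod_mul_prod_compl (s : Finset ι) (f g : ι → M) :
    ∏ i, (if i ∈ s then f i else g i) = (∏ i ∈ s, f i) * ∏ i ∈ sᶜ, g i := by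
  rw [← prod_mul_prod_compl s]
  congr 1 <;> refine prod_congr rfl fun i hi => ?_ <;> simp_all

end Finset

open Finset

section RandomSet

variable {ι R : Type*} [Fintype ι] [DecidableEq ι]

/-- The probability that the random subset of `ι` containing each `i` independently with
probability `p i` equals `K`. -/
def randSetProb [CommRing R] (p : ι → R) (K : Finset ι) : R :=
  (∏ i ∈ K, p i) * ∏ i ∈ Kᶜ, (1 - p i)

theorem randSetProb_eq_prod [CommRing R] (p : ι → R) (K : Finset ι) :
    randSetProb p K = ∏ i, if i ∈ K then p i else 1 - p i :=
  (prod_ite_mem_eq_prod_mul_prod_compl K _ _).symm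

/-- Coordinatewise, the weight of `psum y z` is `z i * a i + (1 - z i) * b i`; expanding the
product over `i` is conditioning on the `z`-set `J`. -/
theorem randSetProb_psum (y z : ι → ℝ) (K : Finset ι) :
    randSetProb (psum y z) K =
      ∑ J, randSetProb (fun i => if i ∈ J then 1 else y i) K * randSetProb z J := by
  set a : ι → ℝ := fun i => if i ∈ K then 1 else 0
  set b : ι → ℝ := fun i => if i ∈ K then y i else 1 - y i
  have hsplit : ∀ J, randSetProb (fun i => if i ∈ J then 1 else y i) K =
      (∏ i ∈ J, a i) * ∏ i ∈ Jᶜ, b i := fun J => by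
    rw [randSetProb_eq_prod, ← prod_ite_mem_eq_prod_mul_prod_compl]
    refine prod_congr rfl fun i _ => ?_
    by_cases hJ : i ∈ J <;> by_cases hK : i ∈ K <;> simp [a, b, hJ, hK]
  calc randSetProb (psum y z) K = ∏ i, (z i * a i + (1 - z i) * b i) := by
        rw [randSetProb_eq_prod]
        refine prod_congr rfl fun i _ => ?_
        by_cases hK : i ∈ K <;> simp only [a, b, hK, psum, if_true, if_false] <;> ring
    _ = ∑ J, (∏ i ∈ J, z i * a i) * ∏ i ∈ Jᶜ, (1 - z i) * b i := Fintype.prod_add _ _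
    _ = _ := by
        refine sum_congr rfl fun J _ => ?_
        rw [hsplit, randSetProb, prod_mul_distrib, prod_mul_distrib]
        ring

end RandomSet

theorem extMulti_eq_sum_randSetProb (f : Finset α → ℝ) (y : Finset α → ℝ) :
    extMulti f y = ∑ K, f (K.sup id) * randSetProb y K := rfl

theorem max_sum_chi_eq_ite {β : Type*} [DecidableEq β] {y : Finset β → ℝ}
    (hy : ∀ S, 0 ≤ y S ∧ y S ≤ 1) (J : Finset (Finset β)) :
    (fun T => max (y T) (∑ S ∈ J, chi S T)) = fun T => if T ∈ J then 1 else y T := by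
  ext T
  have hsum : ∑ S ∈ J, chi S T = if T ∈ J then 1 else 0 := by simp [chi]
  rw [hsum]
  split_ifs
  · exact max_eq_right (hy T).2
  · exact max_eq_left (hy T).1

theorem extMulti_psum_expansion_general (f : Finset α → ℝ)
    (y z : Finset α → ℝ)
    (hy : ∀ S, 0 ≤ y S ∧ y S ≤ 1) :
    extMulti f (psum y z) =
      ∑ J : Finset (Finset α),
        extMulti f (fun T => max (y T) (∑ S ∈ J, chi S T)) *
          ((∏ S ∈ J, z S) * ∏ S ∈ Jᶜ, (1 - z S)) := by
  simp only [max_sum_chi_eq_ite hy, extMulti_eq_sum_randSetProb, randSetProb_psum, mul_sum,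
    sum_mul]
  rw [sum_comm]
  exact sum_congr rfl fun J _ => sum_congr rfl fun K _ => (mul_assoc _ _ _).symm

theorem extMulti_psum_expansion (f : Finset α → ℝ)
    (y z : Finset α → ℝ)
    (hy : ∀ S, 0 ≤ y S ∧ y S ≤ 1) (hz : ∀ S, 0 ≤ z S ∧ z S ≤ 1) :
    extMulti f (psum y z) =
      ∑ J : Finset (Finset α),
        extMulti f (fun T => max (y T) (∑ S ∈ J, chi S T)) *
          ((∏ S ∈ J, z S) * ∏ S ∈ Jᶜ, (1 - z S)) :=
  extMulti_psum_expansion_general f y z hy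
end

section
/- Let f : 2^N → ℝ be a non-negative submodular set function on a finite nonempty set N with extended multilinear extension F, let y ∈ [0,1]^(2^N), and let S ⊆ N. Then F(χ_S ∨ y) ≥ (1 − max_{u ∈ N} marg_u(y)) · f(S). -/
open scoped Classical

variable {α : Type*} [Fintype α] [DecidableEq α]

set_option linter.unusedSectionVars false

noncomputable def chainSum' (f : Finset α → ℝ) (ρ : α → ℝ) : List α → Finset α → ℝ
  | [], _ => 0
  | u :: l, P => ρ u * (f (insert u P) - f P) + chainSum' f ρ l (insert u P)

lemma chainSum'_congr (f : Finset α → ℝ) (ρ ρ' : α → ℝ) :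
    ∀ (l : List α) (P : Finset α), (∀ u ∈ l, ρ u = ρ' u ∨ u ∈ P) →
      chainSum' f ρ l P = chainSum' f ρ' l P
  | [], _, _ => rfl
  | u :: l, P, h => by
    have hrec := chainSum'_congr f ρ ρ' l (insert u P)
      (fun v hv => (h v (List.mem_cons_of_mem _ hv)).imp id Finset.mem_insert_of_mem)
    rcases h u (List.mem_cons_self) with h1 | h1
    · simp [chainSum', hrec, h1]
    · have hP : insert u P = P := Finset.insert_eq_self.2 h1
      rw [hP] at hrec
      simp [chainSum', hrec, hP]

lemma chainSum'_sum (f : Finset α → ℝ) {ι : Type*} (s : Finset ι) (w : ι → ℝ) (ρ : ι → α → ℝ) :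
    ∀ (l : List α) (P : Finset α),
      ∑ J ∈ s, w J * chainSum' f (ρ J) l P
        = chainSum' f (fun u => ∑ J ∈ s, w J * ρ J u) l P
  | [], P => by simp [chainSum']
  | u :: l, P => by
    simp only [chainSum', mul_add, Finset.sum_add_distrib,
      chainSum'_sum f s w ρ l (insert u P)]
    congr 1
    rw [Finset.sum_mul]
    exact Finset.sum_congr rfl fun J _ => (mul_assoc _ _ _).symm

lemma chainSum'_abel (f : Finset α → ℝ) (hf : ∀ A, 0 ≤ f A) (ρ : α → ℝ) :
    ∀ (l : List α) (P : Finset α) (c : ℝ), 0 ≤ c → (∀ u ∈ l, 0 ≤ ρ u ∧ ρ u ≤ c) →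
      l.Pairwise (fun a b => ρ b ≤ ρ a) →
      -(c * f P) ≤ chainSum' f ρ l P
  | [], P, c, hc, _, _ => by
    simp only [chainSum']
    exact neg_nonpos.2 (mul_nonneg hc (hf P))
  | u :: l, P, c, hc, hb, hp => by
    have h0 : 0 ≤ ρ u := (hb u (List.mem_cons_self)).1
    have hIH := chainSum'_abel f hf ρ l (insert u P) (ρ u) h0
      (fun v hv => ⟨(hb v (List.mem_cons_of_mem _ hv)).1, (List.pairwise_cons.1 hp).1 v hv⟩)
      (List.pairwise_cons.1 hp).2
    have hc' : ρ u ≤ c := (hb u (List.mem_cons_self)).2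
    have h1 : ρ u * f P ≤ c * f P := mul_le_mul_of_nonneg_right hc' (hf P)
    simp only [chainSum']
    nlinarith [hf (insert u P), hf P]

lemma chainSum'_le (f : Finset α → ℝ)
    (hsub : ∀ A B : Finset α, f (A ∪ B) + f (A ∩ B) ≤ f A + f B) :
    ∀ (l : List α) (P C B : Finset α), l.Nodup → C ⊆ P →
      (∀ v ∈ P, v ∈ C ∨ v ∉ l.toFinset) → B ⊆ l.toFinset →
      f C + chainSum' f (fun u => if u ∈ B then 1 else 0) l P ≤ f (C ∪ B)
  | [], P, C, B, _, _, _, hB => by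
    have : B = ∅ := Finset.subset_empty.1 (by simpa using hB)
    simp [chainSum', this]
  | u :: l, P, C, B, hnd, hCP, hinv, hB => by
    have hndl : l.Nodup := (List.nodup_cons.1 hnd).2
    have hul : u ∉ l.toFinset := by
      simpa using (List.nodup_cons.1 hnd).1
    by_cases huB : u ∈ B
    · -- u is taken
      have hcongr : chainSum' f (fun v => if v ∈ B then 1 else 0) l (insert u P)
          = chainSum' f (fun v => if v ∈ B.erase u then 1 else 0) l (insert u P) := by
        apply chainSum'_congr
        intro v hv
        by_cases hvu : v = u
        · exact Or.inr (by simp [hvu])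
        · exact Or.inl (by simp [Finset.mem_erase, hvu])
      have hBsub : B.erase u ⊆ l.toFinset := by
        intro v hv
        rcases Finset.mem_erase.1 hv with ⟨hvu, hvB⟩
        have := hB hvB
        simp only [List.toFinset_cons, Finset.mem_insert] at this
        tauto
      have hIH := chainSum'_le f hsub l (insert u P) (insert u C) (B.erase u) hndl
        (Finset.insert_subset_insert _ hCP)
        (by
          intro v hv
          rcases Finset.mem_insert.1 hv with hv | hv
          · exact Or.inl (hv ▸ Finset.mem_insert_self u C)
          · rcases hinv v hv with h | h
            · exact Or.inl (Finset.mem_insert_of_mem h)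
            · right; intro hc; exact h (by simp [hc]))
        hBsub
      have hunion : insert u C ∪ B.erase u = C ∪ B := by
        ext v
        by_cases hvu : v = u
        · simp [hvu, huB]
        · simp [Finset.mem_insert, Finset.mem_erase, Finset.mem_union, hvu]
      rw [hunion] at hIH
      by_cases huC : u ∈ C
      · have hPu : insert u P = P := Finset.insert_eq_self.2 (hCP huC)
        have hCu : insert u C = C := Finset.insert_eq_self.2 huC
        rw [hPu] at hcongr hIH
        rw [hCu] at hIH
        simp only [chainSum', huB, if_pos, hPu]
        rw [hcongr]
        linarith
      · have huP : u ∉ P := by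
          intro hP
          rcases hinv u hP with h | h
          · exact huC h
          · exact h (by simp)
        have hsm := hsub (insert u C) P
        have h1 : insert u C ∪ P = insert u P := by
          rw [Finset.insert_union, Finset.union_eq_right.2 hCP]
        have h2 : insert u C ∩ P = C := by
          rw [Finset.insert_inter_of_notMem huP, Finset.inter_eq_left.2 hCP]
        rw [h1, h2] at hsm
        simp only [chainSum', huB, if_pos]
        rw [hcongr]
        linarith
    · -- u not taken
      have hIH := chainSum'_le f hsub l (insert u P) C B hndl
        (hCP.trans (Finset.subset_insert _ _))
        (by
          intro v hv
          rcases Finset.mem_insert.1 hv with rfl | hv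
          · exact Or.inr hul
          · rcases hinv v hv with h | h
            · exact Or.inl h
            · right; intro hc; exact h (by simp [hc]))
        (by
          intro v hv
          have := hB hv
          simp only [List.toFinset_cons, Finset.mem_insert] at this
          rcases this with rfl | h
          · exact absurd hv huB
          · exact h)
      simp only [chainSum', huB, if_neg, not_false_iff]
      simpa using hIH
lemma W_powerset_sum (z : Finset α → ℝ) (A : Finset (Finset α)) :
    ∑ J ∈ A.powerset, (∏ T ∈ J, z T) * ∏ T ∈ Jᶜ, (1 - z T)
      = ∏ T ∈ Aᶜ, (1 - z T) := by
  have hsplit : ∀ J ∈ A.powerset, (∏ T ∈ J, z T) * ∏ T ∈ Jᶜ, (1 - z T)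
      = ((∏ T ∈ J, z T) * ∏ T ∈ A \ J, (1 - z T)) * ∏ T ∈ Aᶜ, (1 - z T) := by
    intro J hJ
    have hJA : J ⊆ A := Finset.mem_powerset.1 hJ
    have hc : Jᶜ = (A \ J) ∪ Aᶜ := by
      ext T
      simp only [Finset.mem_compl, Finset.mem_sdiff, Finset.mem_union]
      constructor
      · intro h
        by_cases hA : T ∈ A
        · exact Or.inl ⟨hA, h⟩
        · exact Or.inr hA
      · rintro (⟨_, h⟩ | h)
        · exact h
        · exact fun hT => h (hJA hT)
    have hdis : Disjoint (A \ J) Aᶜ :=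
      (disjoint_compl_right).mono_left Finset.sdiff_subset
    rw [hc, Finset.prod_union hdis, mul_assoc]
  rw [Finset.sum_congr rfl hsplit, ← Finset.sum_mul]
  have key : ∑ J ∈ A.powerset, (∏ T ∈ J, z T) * ∏ T ∈ A \ J, (1 - z T) = 1 := by
    rw [← Finset.prod_add]
    simp
  rw [key, one_mul]

theorem extMulti_join_lower_bound [Nonempty α] (f : Finset α → ℝ)
    (hf_nonneg : ∀ S, 0 ≤ f S)
    (hf_submod : ∀ S T : Finset α, f (S ∪ T) + f (S ∩ T) ≤ f S + f T)
    (y : Finset α → ℝ) (hy : ∀ T, 0 ≤ y T ∧ y T ≤ 1) (S : Finset α) :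
    (1 - Finset.univ.sup' Finset.univ_nonempty (fun u => marg y u)) * f S ≤
      extMulti f (fun T => max (chi S T) (y T)) := by
  classical
  set q : α → ℝ := fun u => marg y u with hqdef
  set c : ℝ := Finset.univ.sup' Finset.univ_nonempty q with hcdef
  set z : Finset α → ℝ := fun T => max (chi S T) (y T) with hzdef
  have hz0 : ∀ T, 0 ≤ z T := fun T => le_max_of_le_right (hy T).1
  have hchi1 : ∀ T, chi S T ≤ 1 := by
    intro T
    unfold chi
    split <;> norm_num
  have hz1 : ∀ T, z T ≤ 1 := fun T => max_le (hchi1 T) (hy T).2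
  have hzS : z S = 1 := by
    have h1 : chi S S = 1 := by simp [chi]
    simp only [hzdef]
    rw [h1, max_eq_left (hy S).2]
  have hzne : ∀ T, T ≠ S → z T = y T := by
    intro T hT
    have h0 : chi S T = 0 := by simp [chi, hT]
    simp only [hzdef]
    rw [h0, max_eq_right (hy T).1]
  have hq0 : ∀ u, 0 ≤ q u ∧ q u ≤ 1 := by
    intro u
    have h1 : 0 ≤ ∏ T ∈ Finset.univ.filter (fun T : Finset α => u ∈ T), (1 - y T) :=
      Finset.prod_nonneg fun T _ => by linarith [(hy T).2]
    have h2 : ∏ T ∈ Finset.univ.filter (fun T : Finset α => u ∈ T), (1 - y T) ≤ 1 :=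
      Finset.prod_le_one (fun T _ => by linarith [(hy T).2]) (fun T _ => by linarith [(hy T).1])
    constructor <;> simp only [hqdef, marg] <;> linarith
  have hqc : ∀ u, q u ≤ c := fun u => Finset.le_sup' q (Finset.mem_univ u)
  have hc0 : 0 ≤ c := le_trans (hq0 (Classical.arbitrary α)).1 (hqc _)
  set W : Finset (Finset α) → ℝ := fun J => (∏ T ∈ J, z T) * ∏ T ∈ Jᶜ, (1 - z T) with hWdef
  have hW0 : ∀ J, 0 ≤ W J := fun J =>
    mul_nonneg (Finset.prod_nonneg fun T _ => hz0 T)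
      (Finset.prod_nonneg fun T _ => by linarith [hz1 T])
  have hWsum : ∑ J : Finset (Finset α), W J = 1 := by
    have h := W_powerset_sum z (Finset.univ : Finset (Finset α))
    rw [Finset.powerset_univ] at h
    simpa [hWdef] using h
  have hWS : ∀ J : Finset (Finset α), S ∉ J → W J = 0 := by
    intro J hS
    have hSc : S ∈ Jᶜ := Finset.mem_compl.2 hS
    have h : ∏ T ∈ Jᶜ, (1 - z T) = 0 := Finset.prod_eq_zero hSc (by rw [hzS]; ring)
    simp [hWdef, h]
  have hQ : ∀ u : α, ∑ J : Finset (Finset α), W J * (if u ∈ J.sup id then 1 else 0)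
      = marg z u := by
    intro u
    set A : Finset (Finset α) := Finset.univ.filter (fun T : Finset α => u ∉ T) with hA
    have hmem : ∀ J : Finset (Finset α), u ∉ J.sup id ↔ J ∈ A.powerset := by
      intro J
      rw [Finset.mem_powerset]
      constructor
      · intro h T hT
        simp only [hA, Finset.mem_filter, Finset.mem_univ, true_and]
        exact fun hu => h (Finset.mem_sup.2 ⟨T, hT, hu⟩)
      · intro h hu
        rcases Finset.mem_sup.1 hu with ⟨T, hT, huT⟩
        have h2 := h hT
        simp only [hA, Finset.mem_filter, Finset.mem_univ, true_and] at h2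
        exact h2 huT
    have e1 : ∀ J : Finset (Finset α), W J * (if u ∈ J.sup id then 1 else 0)
        = W J - (if J ∈ A.powerset then W J else 0) := by
      intro J
      by_cases h : u ∈ J.sup id
      · rw [if_pos h, if_neg (fun hc => ((hmem J).2 hc) h), mul_one, sub_zero]
      · rw [if_neg h, if_pos ((hmem J).1 h), mul_zero, sub_self]
    rw [Finset.sum_congr rfl (fun J _ => e1 J), Finset.sum_sub_distrib, hWsum,
      Finset.sum_ite_mem, Finset.univ_inter]
    have h3 : ∑ J ∈ A.powerset, W J = ∏ T ∈ Aᶜ, (1 - z T) := by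
      simpa [hWdef] using W_powerset_sum z A
    have hAc : Aᶜ = Finset.univ.filter (fun T : Finset α => u ∈ T) := by
      ext T
      simp [hA]
    rw [h3, hAc, marg]
  have hmargz : ∀ u, u ∉ S → marg z u = q u := by
    intro u hu
    simp only [hqdef, marg]
    congr 1
    apply Finset.prod_congr rfl
    intro T hT
    have huT : u ∈ T := (Finset.mem_filter.1 hT).2
    have hTS : T ≠ S := fun h => hu (h ▸ huT)
    rw [hzne T hTS]
  -- the sorted list of elements
  set le : α → α → Bool := fun a b => decide (q b ≤ q a) with hle
  set L : List α := Finset.univ.toList.mergeSort le with hLdef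
  have hperm : L.Perm Finset.univ.toList := List.mergeSort_perm _ _
  have hnd : L.Nodup := hperm.nodup_iff.2 (Finset.nodup_toList _)
  have hLt : L.toFinset = Finset.univ := by
    ext v
    rw [List.mem_toFinset, hperm.mem_iff, Finset.mem_toList]
  have hsorted : L.Pairwise (fun a b => q b ≤ q a) := by
    have h := List.pairwise_mergeSort (le := le)
      (fun a b c hab hbc => by
        simp only [hle, decide_eq_true_eq] at *
        linarith)
      (fun a b => by
        simp only [hle, Bool.or_eq_true, decide_eq_true_eq]
        exact (le_total (q b) (q a)))
      Finset.univ.toList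
    exact h.imp (fun h' => by simpa [hle] using h')
  have hext : extMulti f z = ∑ J : Finset (Finset α), f (J.sup id) * W J := by
    rw [hWdef, extMulti]
  have key1 : ∀ J : Finset (Finset α),
      (f S + chainSum' f (fun u => if u ∈ J.sup id then 1 else 0) L S) * W J
        ≤ f (J.sup id) * W J := by
    intro J
    by_cases hSJ : S ∈ J
    · apply mul_le_mul_of_nonneg_right _ (hW0 J)
      have hsub : S ⊆ J.sup id := by
        simpa using Finset.le_sup (f := id) hSJ
      have h := chainSum'_le f hf_submod L S S (J.sup id) hnd (subset_refl S)
        (fun v hv => Or.inl hv) (by rw [hLt]; exact Finset.subset_univ _)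
      rwa [Finset.union_eq_right.2 hsub] at h
    · rw [hWS J hSJ]
      simp
  have hfin := Finset.sum_le_sum (fun J (_ : J ∈ (Finset.univ : Finset (Finset (Finset α)))) => key1 J)
  have step2 : ∑ J : Finset (Finset α),
      (f S + chainSum' f (fun u => if u ∈ J.sup id then 1 else 0) L S) * W J
      = f S * (∑ J : Finset (Finset α), W J)
        + ∑ J : Finset (Finset α), W J * chainSum' f (fun u => if u ∈ J.sup id then 1 else 0) L S := by
    rw [Finset.mul_sum, ← Finset.sum_add_distrib]
    exact Finset.sum_congr rfl fun J _ => by ring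
  have step3 : ∑ J : Finset (Finset α), W J * chainSum' f (fun u => if u ∈ J.sup id then 1 else 0) L S
      = chainSum' f q L S := by
    rw [chainSum'_sum]
    rw [show (fun u => ∑ J : Finset (Finset α), W J * (if u ∈ J.sup id then 1 else 0))
        = fun u => marg z u from funext hQ]
    apply chainSum'_congr
    intro u _
    by_cases huS : u ∈ S
    · exact Or.inr huS
    · exact Or.inl (hmargz u huS)
  have step4 : -(c * f S) ≤ chainSum' f q L S :=
    chainSum'_abel f hf_nonneg q L S c hc0 (fun u _ => ⟨(hq0 u).1, hqc u⟩) hsorted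
  rw [hext]
  rw [step2, hWsum, step3] at hfin
  have hring : (1 - c) * f S = f S * 1 + -(c * f S) := by ring
  rw [hring]
  linarith
end

section
/- Let f : 2^N → ℝ be a non-negative submodular set function on a finite set N with extended multilinear extension F, let y ∈ [0,1]^(2^N), and let S, T ⊆ N be disjoint sets. Then F(y[S↦1][T↦1]) + F(y[S↦0][T↦0]) ≤ F(y[S↦1][T↦0]) + F(y[S↦0][T↦1]); that is, the mixed second-order difference of F in the coordinates indexed by S and T is non-positive. -/
open scoped Classical

variable {α : Type*} [Fintype α] [DecidableEq α]

/-!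
`extMulti f y` is the multilinear extension of `J ↦ f (⋃ J)` over families `J` of subsets:
the expectation of `f` at the union `U` of a random family containing each `S` independently
with probability `y S`. Setting the coordinate of `S` to `1` amounts to always adding `S` to
the family, so all four values are expectations at the common point `y[S↦0][T↦0]`, and the claim
follows termwise from `f (S ∪ T ∪ U) + f U ≤ f (S ∪ U) + f (T ∪ U)`: submodularity for `S ∪ U`
and `T ∪ U`, whose intersection is `U` since `S` and `T` are disjoint.
-/

open Finset Function

lemma submodular_sup_add_le {L : Type*} [DistribLattice L] [OrderBot L] (f : L → ℝ)
    (hf : ∀ a b, f (a ⊔ b) + f (a ⊓ b) ≤ f a + f b) {a b : L} (hab : Disjoint a b) (u : L) :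
    f (a ⊔ (b ⊔ u)) + f u ≤ f (a ⊔ u) + f (b ⊔ u) := by
  have hsup : (a ⊔ u) ⊔ (b ⊔ u) = a ⊔ (b ⊔ u) := by
    rw [sup_assoc, sup_left_comm u b u, sup_idem]
  have hinf : (a ⊔ u) ⊓ (b ⊔ u) = u := by
    rw [← sup_inf_right, hab.eq_bot, bot_sup_eq]
  simpa only [hsup, hinf] using hf (a ⊔ u) (b ⊔ u)

section Multilinear

variable {ι : Type*} [Fintype ι] [DecidableEq ι]

def subsetWeight (x : ι → ℝ) (S : Finset ι) : ℝ :=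
  (∏ u ∈ S, x u) * ∏ u ∈ Sᶜ, (1 - x u)

lemma stdMulti_eq_sum_subsetWeight (f : Finset ι → ℝ) (x : ι → ℝ) :
    stdMulti f x = ∑ S, f S * subsetWeight x S :=
  rfl

lemma subsetWeight_nonneg {x : ι → ℝ} (hx : ∀ u, 0 ≤ x u ∧ x u ≤ 1) (S : Finset ι) :
    0 ≤ subsetWeight x S :=
  mul_nonneg (prod_nonneg fun u _ => (hx u).1) (prod_nonneg fun u _ => sub_nonneg.2 (hx u).2)

variable {i : ι} {T : Finset ι}

lemma prod_one_sub_update_compl_insert (x : ι → ℝ) (a : ℝ) :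
    ∏ u ∈ (insert i T)ᶜ, (1 - update x i a u) = ∏ u ∈ (insert i T)ᶜ, (1 - x u) :=
  prod_congr rfl fun u hu => by
    rw [update_of_ne (ne_of_mem_of_not_mem hu (by simp : i ∉ (insert i T)ᶜ))]

lemma subsetWeight_update_insert (x : ι → ℝ) (a : ℝ) (hi : i ∉ T) :
    subsetWeight (update x i a) (insert i T) =
      a * ((∏ u ∈ T, x u) * ∏ u ∈ (insert i T)ᶜ, (1 - x u)) := by
  rw [subsetWeight, prod_insert hi, update_self, prod_update_of_notMem hi,
    prod_one_sub_update_compl_insert, mul_assoc]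

lemma subsetWeight_update_of_notMem (x : ι → ℝ) (a : ℝ) (hi : i ∉ T) :
    subsetWeight (update x i a) T =
      (1 - a) * ((∏ u ∈ T, x u) * ∏ u ∈ (insert i T)ᶜ, (1 - x u)) := by
  rw [subsetWeight, ← mul_prod_erase Tᶜ _ (mem_compl.2 hi), ← compl_insert, update_self,
    prod_update_of_notMem hi, prod_one_sub_update_compl_insert]
  ring

lemma sum_univ_eq_sum_powerset_erase {β : Type*} [AddCommMonoid β] (i : ι)
    (F : Finset ι → β) :
    ∑ S, F S = ∑ T ∈ (univ.erase i).powerset, (F T + F (insert i T)) := by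
  rw [sum_add_distrib, ← sum_powerset_insert (notMem_erase i univ), insert_erase (mem_univ i),
    powerset_univ]

lemma stdMulti_update_one (f : Finset ι → ℝ) (x : ι → ℝ) (i : ι) :
    stdMulti f (update x i 1) = stdMulti (fun S => f (insert i S)) (update x i 0) := by
  simp only [stdMulti_eq_sum_subsetWeight, sum_univ_eq_sum_powerset_erase i]
  refine sum_congr rfl fun T hT => ?_
  have hi : i ∉ T := fun h => notMem_erase i univ (mem_powerset.1 hT h)
  simp only [subsetWeight_update_insert _ _ hi, subsetWeight_update_of_notMem _ _ hi,
    insert_idem]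
  ring

lemma stdMulti_add (f g : Finset ι → ℝ) (x : ι → ℝ) :
    stdMulti (fun S => f S + g S) x = stdMulti f x + stdMulti g x := by
  simp only [stdMulti_eq_sum_subsetWeight, add_mul, sum_add_distrib]

lemma stdMulti_mono {f g : Finset ι → ℝ} (hfg : ∀ S, f S ≤ g S) {x : ι → ℝ}
    (hx : ∀ u, 0 ≤ x u ∧ x u ≤ 1) : stdMulti f x ≤ stdMulti g x :=
  sum_le_sum fun S _ => mul_le_mul_of_nonneg_right (hfg S) (subsetWeight_nonneg hx S)

variable {j : ι} (f : Finset ι → ℝ) (x : ι → ℝ)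

lemma stdMulti_update_update_one_zero (hij : i ≠ j) :
    stdMulti f (update (update x i 1) j 0) =
      stdMulti (fun S => f (insert i S)) (update (update x i 0) j 0) := by
  rw [update_comm hij, stdMulti_update_one, update_comm hij.symm]

lemma stdMulti_update_update_one_one (hij : i ≠ j) :
    stdMulti f (update (update x i 1) j 1) =
      stdMulti (fun S => f (insert i (insert j S))) (update (update x i 0) j 0) := by
  simp_rw [stdMulti_update_one, stdMulti_update_update_one_zero _ _ hij, insert_comm j i]

end Multilinear

lemma extMulti_eq_stdMulti (f y : Finset α → ℝ) :
    extMulti f y = stdMulti (fun J => f (J.sup id)) y :=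
  rfl

theorem extMulti_mixed_second_difference_nonpos_general (f : Finset α → ℝ)
    (hf_submod : ∀ S T : Finset α, f (S ∪ T) + f (S ∩ T) ≤ f S + f T)
    (y : Finset α → ℝ) (hy : ∀ A, 0 ≤ y A ∧ y A ≤ 1)
    (S T : Finset α) (hST : Disjoint S T) :
    extMulti f (Function.update (Function.update y S 1) T 1) +
        extMulti f (Function.update (Function.update y S 0) T 0) ≤
      extMulti f (Function.update (Function.update y S 1) T 0) +
        extMulti f (Function.update (Function.update y S 0) T 1) := by
  obtain rfl | hne := eq_or_ne S T
  · simp only [update_idem, add_comm, le_refl]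
  have hz : ∀ A, 0 ≤ update (update y S 0) T 0 A ∧ update (update y S 0) T 0 A ≤ 1 := by
    intro A
    simp only [update_apply]
    split_ifs <;> simp [hy A]
  simp only [extMulti_eq_stdMulti, stdMulti_update_update_one_one _ _ hne,
    stdMulti_update_update_one_zero _ _ hne, stdMulti_update_one, ← stdMulti_add]
  refine stdMulti_mono (fun J => ?_) hz
  simpa only [sup_insert, id] using
    submodular_sup_add_le f hf_submod hST (J.sup id)

theorem extMulti_mixed_second_difference_nonpos (f : Finset α → ℝ)
    (hf_nonneg : ∀ S, 0 ≤ f S)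
    (hf_submod : ∀ S T : Finset α, f (S ∪ T) + f (S ∩ T) ≤ f S + f T)
    (y : Finset α → ℝ) (hy : ∀ A, 0 ≤ y A ∧ y A ≤ 1)
    (S T : Finset α) (hST : Disjoint S T) :
    extMulti f (Function.update (Function.update y S 1) T 1) +
        extMulti f (Function.update (Function.update y S 0) T 0) ≤
      extMulti f (Function.update (Function.update y S 1) T 0) +
        extMulti f (Function.update (Function.update y S 0) T 1) :=
  extMulti_mixed_second_difference_nonpos_general f hf_submod y hy S T hST
end

section
/- Let f : 2^N → ℝ be a non-negative submodular set function on a finite set N with extended multilinear extension F, let y ∈ [0,1]^(2^N), and let S, T ⊆ N be disjoint sets. Then the function t ↦ F(y + t · (χ_S − χ_T)) is convex on the set {t ∈ ℝ : 0 ≤ y_S + t ≤ 1 and 0 ≤ y_T − t ≤ 1}; that is, F is convex along any line of direction d = χ_S − χ_T. -/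
open scoped Classical

variable {α : Type*} [Fintype α] [DecidableEq α]

/-!
Only the coordinates `S` and `T` move along the line, and `F` is affine in each coordinate.
Conditioning on the coordinates other than `S` and `T` writes `F(y + t (χ_S - χ_T))` as a
nonnegative combination of bilinear interpolations of the four values
`f(U), f(S ∪ U), f(T ∪ U), f(S ∪ T ∪ U)` at `(y_S + t, y_T - t)`. Each of these is a quadratic
in `t` whose leading coefficient `f(S ∪ U) + f(T ∪ U) - f(U) - f(S ∪ T ∪ U)` is nonnegative
by submodularity, as `S` and `T` are disjoint.
-/

open Finset

lemma ConvexOn.finset_sum {𝕜 E β ι : Type*} [Semiring 𝕜] [PartialOrder 𝕜] [AddCommMonoid E]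
    [AddCommMonoid β] [PartialOrder β] [IsOrderedAddMonoid β] [SMul 𝕜 E] [Module 𝕜 β]
    {s : Set E} (hs : Convex 𝕜 s) {f : ι → E → β} (I : Finset ι)
    (hf : ∀ i ∈ I, ConvexOn 𝕜 s (f i)) : ConvexOn 𝕜 s fun x => ∑ i ∈ I, f i x := by
  classical
  induction I using Finset.induction_on with
  | empty => simpa using convexOn_const (0 : β) hs
  | insert i I hi ih =>
    simp only [sum_insert hi]
    exact (hf i (mem_insert_self i I)).add (ih fun j hj => hf j (mem_insert_of_mem hj))

lemma convexOn_univ_of_eq_quadratic {φ : ℝ → ℝ} {a b c : ℝ} (ha : 0 ≤ a)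
    (hφ : ∀ t, φ t = a * t ^ 2 + b * t + c) : ConvexOn ℝ Set.univ φ := by
  refine ⟨convex_univ, fun u _ v _ μ ν hμ hν hμν => ?_⟩
  obtain rfl : ν = 1 - μ := by linarith
  simp only [smul_eq_mul, hφ]
  nlinarith [mul_nonneg (mul_nonneg (mul_nonneg ha hμ) hν) (sq_nonneg (u - v))]

def bilinInterp (a b c d p q : ℝ) : ℝ :=
  (1 - q) * ((1 - p) * a + p * b) + q * ((1 - p) * c + p * d)

lemma convexOn_bilinInterp_antidiagonal {a b c d : ℝ} (h : a + d ≤ b + c) (p q : ℝ) :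
    ConvexOn ℝ Set.univ fun t => bilinInterp a b c d (p + t) (q - t) :=
  convexOn_univ_of_eq_quadratic (a := b + c - a - d) (b := b - c + (a - b - c + d) * (q - p))
    (c := bilinInterp a b c d p q) (by linarith) fun t => by unfold bilinInterp; ring

lemma submodular_disjoint_union {β : Type*} [DecidableEq β] {f : Finset β → ℝ}
    (hf : ∀ S T : Finset β, f (S ∪ T) + f (S ∩ T) ≤ f S + f T) {S T : Finset β}
    (hST : Disjoint S T) (U : Finset β) :
    f U + f (S ∪ (T ∪ U)) ≤ f (S ∪ U) + f (T ∪ U) := by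
  have h := hf (S ∪ U) (T ∪ U)
  rwa [← inter_union_distrib_right, disjoint_iff_inter_eq_empty.mp hST, empty_union,
    ← union_union_distrib_right, union_assoc, add_comm] at h

section BernoulliWeight

variable {ι : Type*} [DecidableEq ι]

/-- The probability that the random subset of `U` containing each `A` independently with
probability `y A` is `J`. -/
def bernoulliWeight (U : Finset ι) (y : ι → ℝ) (J : Finset ι) : ℝ :=
  (∏ A ∈ J, y A) * ∏ A ∈ U \ J, (1 - y A)

lemma bernoulliWeight_nonneg {y : ι → ℝ} (hy : ∀ A, 0 ≤ y A ∧ y A ≤ 1) (U J : Finset ι) :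
    0 ≤ bernoulliWeight U y J :=
  mul_nonneg (prod_nonneg fun A _ => (hy A).1)
    (prod_nonneg fun A _ => sub_nonneg.2 (hy A).2)

lemma bernoulliWeight_congr {U J : Finset ι} {y y' : ι → ℝ} (hJ : J ⊆ U)
    (h : ∀ A ∈ U, y A = y' A) : bernoulliWeight U y J = bernoulliWeight U y' J := by
  unfold bernoulliWeight
  rw [prod_congr rfl fun A hA => h A (hJ hA),
    prod_congr rfl fun A hA => congrArg (1 - ·) (h A (sdiff_subset hA))]

lemma sum_powerset_insert_bernoulliWeight {U : Finset ι} {a : ι} (ha : a ∉ U) (y : ι → ℝ)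
    (g : Finset ι → ℝ) :
    ∑ J ∈ (insert a U).powerset, bernoulliWeight (insert a U) y J * g J =
      ∑ J ∈ U.powerset, bernoulliWeight U y J * ((1 - y a) * g J + y a * g (insert a J)) := by
  rw [sum_powerset_insert ha, ← sum_add_distrib]
  refine sum_congr rfl fun J hJ => ?_
  have haJ : a ∉ J := fun h => ha (mem_powerset.1 hJ h)
  have h_out : bernoulliWeight (insert a U) y J = (1 - y a) * bernoulliWeight U y J := by
    unfold bernoulliWeight
    rw [insert_sdiff_of_notMem _ haJ, prod_insert fun h => ha (sdiff_subset h)]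
    ring
  have h_in : bernoulliWeight (insert a U) y (insert a J) = y a * bernoulliWeight U y J := by
    unfold bernoulliWeight
    rw [prod_insert haJ, insert_sdiff_insert, sdiff_insert_of_notMem ha]
    ring
  rw [h_out, h_in]
  ring

lemma sum_powerset_insert_insert_bernoulliWeight {U : Finset ι} {s t : ι} (hs : s ∉ U)
    (ht : t ∉ U) (hst : s ≠ t) (y : ι → ℝ) (g : Finset ι → ℝ) :
    ∑ J ∈ (insert s (insert t U)).powerset, bernoulliWeight (insert s (insert t U)) y J * g J =
      ∑ K ∈ U.powerset, bernoulliWeight U y K *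
        bilinInterp (g K) (g (insert s K)) (g (insert t K)) (g (insert s (insert t K)))
          (y s) (y t) := by
  rw [sum_powerset_insert_bernoulliWeight (by simp [hst, hs]),
    sum_powerset_insert_bernoulliWeight ht]
  rfl

end BernoulliWeight

lemma extMulti_eq_sum_bernoulliWeight (f y : Finset α → ℝ) :
    extMulti f y = ∑ J ∈ (univ : Finset (Finset α)).powerset,
      bernoulliWeight univ y J * f (J.sup id) := by
  rw [powerset_univ]
  refine sum_congr rfl fun J _ => ?_
  rw [bernoulliWeight, compl_eq_univ_sdiff, mul_comm]

lemma extMulti_along_chi_sub_chi (f y : Finset α → ℝ) {S T : Finset α} (hST : S ≠ T) (t : ℝ) :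
    extMulti f (fun A => y A + t * (chi S A - chi T A)) =
      ∑ K ∈ ((univ.erase S).erase T).powerset, bernoulliWeight ((univ.erase S).erase T) y K *
        bilinInterp (f (K.sup id)) (f (S ∪ K.sup id)) (f (T ∪ K.sup id))
          (f (S ∪ (T ∪ K.sup id))) (y S + t) (y T - t) := by
  set R := (univ.erase S).erase T with hR
  have h_univ : (univ : Finset (Finset α)) = insert S (insert T R) := by
    rw [hR, insert_erase (mem_erase.2 ⟨hST.symm, mem_univ T⟩), insert_erase (mem_univ S)]
  rw [extMulti_eq_sum_bernoulliWeight, h_univ,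
    sum_powerset_insert_insert_bernoulliWeight (by simp [hR, hST]) (by simp [hR]) hST]
  refine sum_congr rfl fun K hK => ?_
  have h_weight : bernoulliWeight R (fun A => y A + t * (chi S A - chi T A)) K =
      bernoulliWeight R y K := by
    refine bernoulliWeight_congr (mem_powerset.1 hK) fun A hA => ?_
    obtain ⟨hAT, hAS⟩ : A ≠ T ∧ A ≠ S := by simpa [hR] using hA
    simp [chi, hAT, hAS]
  rw [h_weight]
  simp [chi, hST, Ne.symm hST, sup_insert, sub_eq_add_neg]

theorem extMulti_convex_along_direction_general (f : Finset α → ℝ)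
    (hf_submod : ∀ S T : Finset α, f (S ∪ T) + f (S ∩ T) ≤ f S + f T)
    (y : Finset α → ℝ) (hy : ∀ A, 0 ≤ y A ∧ y A ≤ 1)
    (S T : Finset α) (hST : Disjoint S T) :
    ConvexOn ℝ
      {t : ℝ | (0 ≤ y S + t ∧ y S + t ≤ 1) ∧ (0 ≤ y T - t ∧ y T - t ≤ 1)}
      (fun t => extMulti f (fun A => y A + t * (chi S A - chi T A))) := by
  have h_convex : Convex ℝ
      {t : ℝ | (0 ≤ y S + t ∧ y S + t ≤ 1) ∧ (0 ≤ y T - t ∧ y T - t ≤ 1)} :=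
    Set.OrdConnected.convex ⟨fun u hu v hv t ⟨hut, htv⟩ => by
      simp only [Set.mem_ofPred_eq] at hu hv ⊢
      refine ⟨⟨?_, ?_⟩, ?_, ?_⟩ <;> linarith⟩
  by_cases hST_eq : S = T
  · subst hST_eq
    simpa using convexOn_const (extMulti f y) h_convex
  refine ConvexOn.subset ?_ (Set.subset_univ _) h_convex
  simp_rw [extMulti_along_chi_sub_chi f y hST_eq]
  exact ConvexOn.finset_sum convex_univ _ fun K _ =>
    (convexOn_bilinInterp_antidiagonal (submodular_disjoint_union hf_submod hST _) _ _).smul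
      (bernoulliWeight_nonneg hy _ _)

theorem extMulti_convex_along_direction (f : Finset α → ℝ)
    (hf_nonneg : ∀ S, 0 ≤ f S)
    (hf_submod : ∀ S T : Finset α, f (S ∪ T) + f (S ∩ T) ≤ f S + f T)
    (y : Finset α → ℝ) (hy : ∀ A, 0 ≤ y A ∧ y A ≤ 1)
    (S T : Finset α) (hST : Disjoint S T) :
    ConvexOn ℝ
      {t : ℝ | (0 ≤ y S + t ∧ y S + t ≤ 1) ∧ (0 ≤ y T - t ∧ y T - t ≤ 1)}
      (fun t => extMulti f (fun A => y A + t * (chi S A - chi T A))) :=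
  extMulti_convex_along_direction_general f hf_submod y hy S T hST
end

section
/- Let f : 2^N → ℝ be a non-negative submodular set function on a finite set N, let T ⊆ N, let p ∈ [0,1], and let μ be a probability mass function on the subsets of N (μ(A) ≥ 0 for all A ⊆ N and Σ_{A ⊆ N} μ(A) = 1) such that every element u ∈ N satisfies Σ_{A ⊆ N, u ∈ A} μ(A) ≤ p. Then Σ_{A ⊆ N} μ(A) · f(A ∪ T) ≥ (1 − p) · f(T). -/
open scoped Classical

variable {α : Type*} [Fintype α] [DecidableEq α]

noncomputable def inclusionProb (μ : Finset α → ℝ) (u : α) : ℝ :=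
  ∑ A ∈ Finset.univ.filter (fun A : Finset α => u ∈ A), μ A

theorem inclusionProb_nonneg {μ : Finset α → ℝ} (hμ : ∀ A, 0 ≤ μ A) (u : α) :
    0 ≤ inclusionProb μ u :=
  Finset.sum_nonneg fun A _ => hμ A

theorem sum_filter_notMem_eq_one_sub_inclusionProb {μ : Finset α → ℝ}
    (hμ : ∑ A : Finset α, μ A = 1) (u : α) :
    ∑ A ∈ Finset.univ.filter (fun A : Finset α => u ∉ A), μ A = 1 - inclusionProb μ u := by
  rw [← hμ, ← Finset.sum_filter_add_sum_filter_not Finset.univ (fun A : Finset α => u ∈ A) μ,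
    inclusionProb, add_sub_cancel_left]

theorem marginal_le_marginal_of_subset {β : Type*} [DecidableEq β] {f : Finset β → ℝ}
    (hf : ∀ S T : Finset β, f (S ∪ T) + f (S ∩ T) ≤ f S + f T)
    {S R : Finset β} (hSR : S ⊆ R) {u : β} (hu : u ∉ R) :
    f (insert u R) - f R ≤ f (insert u S) - f S := by
  have h := hf (insert u S) R
  rw [Finset.insert_union, Finset.union_eq_right.mpr hSR, Finset.insert_inter_of_notMem hu,
    Finset.inter_eq_left.mpr hSR] at h
  linarith

theorem apply_union_insert_le {β : Type*} [DecidableEq β] {f : Finset β → ℝ}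
    (hf : ∀ S T : Finset β, f (S ∪ T) + f (S ∩ T) ≤ f S + f T) (A S : Finset β) (u : β) :
    f (A ∪ insert u S) ≤ f (A ∪ S) + if u ∈ A then 0 else f (insert u S) - f S := by
  rw [Finset.union_insert]
  by_cases huA : u ∈ A
  · simp [huA]
  by_cases huS : u ∈ S
  · simp [huS]
  have := marginal_le_marginal_of_subset hf Finset.subset_union_right
    (R := A ∪ S) (Finset.notMem_union.mpr ⟨huA, huS⟩)
  simp only [huA, if_false]
  linarith

theorem sum_mul_union_insert_le {f : Finset α → ℝ}
    (hf : ∀ S T : Finset α, f (S ∪ T) + f (S ∩ T) ≤ f S + f T)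
    {μ : Finset α → ℝ} (hμ : ∀ A, 0 ≤ μ A) (hμ1 : ∑ A : Finset α, μ A = 1)
    (u : α) (S : Finset α) :
    ∑ A : Finset α, μ A * f (A ∪ insert u S) ≤
      ∑ A : Finset α, μ A * f (A ∪ S) + (1 - inclusionProb μ u) * (f (insert u S) - f S) := by
  calc ∑ A : Finset α, μ A * f (A ∪ insert u S)
      ≤ ∑ A : Finset α, (μ A * f (A ∪ S) + μ A * if u ∈ A then 0 else f (insert u S) - f S) :=
        Finset.sum_le_sum fun A _ => by
          rw [← mul_add]
          exact mul_le_mul_of_nonneg_left (apply_union_insert_le hf A S u) (hμ A)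
    _ = _ := by
        rw [Finset.sum_add_distrib, ← sum_filter_notMem_eq_one_sub_inclusionProb hμ1,
          Finset.sum_mul, Finset.sum_filter]
        congr 1
        refine Finset.sum_congr rfl fun A _ => ?_
        split_ifs <;> simp

/-- Induction on `Tᶜ`, largest inclusion probability first: for that `u`, submodularity gives
`E f(A ∪ T) ≥ E f(A ∪ insert u T) - (1 - P[u ∈ A]) (f (insert u T) - f T)`, and the induction
hypothesis for `insert u T` with `q = P[u ∈ A]` bounds the right side below by
`(1 - P[u ∈ A]) f T`. -/
theorem one_sub_mul_le_sum_mul_union {f : Finset α → ℝ}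
    (hf_nonneg : ∀ S, 0 ≤ f S) (hf : ∀ S T : Finset α, f (S ∪ T) + f (S ∩ T) ≤ f S + f T)
    {μ : Finset α → ℝ} (hμ : ∀ A, 0 ≤ μ A) (hμ1 : ∑ A : Finset α, μ A = 1)
    (T : Finset α) {q : ℝ} (hq0 : 0 ≤ q) (hq : ∀ u ∉ T, inclusionProb μ u ≤ q) :
    (1 - q) * f T ≤ ∑ A : Finset α, μ A * f (A ∪ T) := by
  induction hT : Tᶜ using Finset.induction_on_max_value (inclusionProb μ)
    generalizing T q with
  | empty =>
    rw [Finset.compl_eq_empty_iff] at hT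
    have hunion (A : Finset α) : A ∪ Finset.univ = Finset.univ :=
      Finset.union_eq_right.mpr A.subset_univ
    simp only [hT, hunion, ← Finset.sum_mul, hμ1, one_mul]
    exact mul_le_of_le_one_left (hf_nonneg _) (by linarith)
  | insert u s hus hmax ih =>
    have huT : u ∉ T := Finset.mem_compl.mp (hT ▸ Finset.mem_insert_self u s)
    have hT' : (insert u T)ᶜ = s := by
      rw [Finset.compl_insert, hT, Finset.erase_insert hus]
    have ih' := ih (insert u T) (inclusionProb_nonneg hμ u)
      (fun v hv => hmax v (hT' ▸ Finset.mem_compl.mpr hv)) hT'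
    have hstep := sum_mul_union_insert_le hf hμ hμ1 u T
    calc (1 - q) * f T ≤ (1 - inclusionProb μ u) * f T :=
          mul_le_mul_of_nonneg_right (by linarith [hq u huT]) (hf_nonneg T)
      _ ≤ _ := by linarith

theorem expected_union_lower_bound_general (f : Finset α → ℝ)
    (hf_nonneg : ∀ S, 0 ≤ f S)
    (hf_submod : ∀ S T : Finset α, f (S ∪ T) + f (S ∩ T) ≤ f S + f T)
    (T : Finset α) (p : ℝ) (hp0 : 0 ≤ p)
    (μ : Finset α → ℝ) (hμ_nonneg : ∀ A, 0 ≤ μ A)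
    (hμ_sum : ∑ A : Finset α, μ A = 1)
    (hμ_marg : ∀ u : α,
      ∑ A ∈ Finset.univ.filter (fun A : Finset α => u ∈ A), μ A ≤ p) :
    (1 - p) * f T ≤ ∑ A : Finset α, μ A * f (A ∪ T) :=
  one_sub_mul_le_sum_mul_union hf_nonneg hf_submod hμ_nonneg hμ_sum T hp0 fun u _ => hμ_marg u

theorem expected_union_lower_bound (f : Finset α → ℝ)
    (hf_nonneg : ∀ S, 0 ≤ f S)
    (hf_submod : ∀ S T : Finset α, f (S ∪ T) + f (S ∩ T) ≤ f S + f T)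
    (T : Finset α) (p : ℝ) (hp0 : 0 ≤ p) (hp1 : p ≤ 1)
    (μ : Finset α → ℝ) (hμ_nonneg : ∀ A, 0 ≤ μ A)
    (hμ_sum : ∑ A : Finset α, μ A = 1)
    (hμ_marg : ∀ u : α,
      ∑ A ∈ Finset.univ.filter (fun A : Finset α => u ∈ A), μ A ≤ p) :
    (1 - p) * f T ≤ ∑ A : Finset α, μ A * f (A ∪ T) :=
  expected_union_lower_bound_general f hf_nonneg hf_submod T p hp0 μ hμ_nonneg hμ_sum hμ_marg
end

section
/- Let f : 2^N → ℝ be a set function on a finite set N with extended multilinear extension F, let y ∈ [0,1]^(2^N), and let u ∈ N. Define z ∈ [0,1]^(2^N) by: z_{{u}} = 1 − ∏_{S ⊆ N, u ∈ S} (1 − y_S); z_S = 0 for every S ⊆ N with u ∈ S and S ≠ {u}; z_S = 1 − (1 − y_S)(1 − y_{S ∪ {u}}) for every nonempty S ⊆ N ∖ {u}; and z_∅ = y_∅. Then marg(z) = marg(y), and if f is non-negative and submodular then F(z) ≥ F(y). -/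
open scoped Classical

variable {α : Type*} [Fintype α] [DecidableEq α]

namespace RelaxAux

variable {ι : Type*} [DecidableEq ι]

noncomputable def Ew (s : Finset ι) (p : ι → ℝ) (φ : Finset ι → ℝ) : ℝ :=
  ∑ J ∈ s.powerset, φ J * ((∏ i ∈ J, p i) * ∏ i ∈ s \ J, (1 - p i))

lemma Ew_empty (p : ι → ℝ) (φ : Finset ι → ℝ) : Ew ∅ p φ = φ ∅ := by
  simp [Ew]

lemma Ew_congr {s : Finset ι} {p : ι → ℝ} {φ ψ : Finset ι → ℝ}
    (h : ∀ J ∈ s.powerset, φ J = ψ J) : Ew s p φ = Ew s p ψ :=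
  Finset.sum_congr rfl fun J hJ => by rw [h J hJ]

lemma Ew_congr_p {s : Finset ι} {p p' : ι → ℝ} (φ : Finset ι → ℝ)
    (h : ∀ i ∈ s, p i = p' i) : Ew s p φ = Ew s p' φ := by
  refine Finset.sum_congr rfl fun J hJ => ?_
  rw [Finset.mem_powerset] at hJ
  congr 1
  congr 1
  · exact Finset.prod_congr rfl fun i hi => h i (hJ hi)
  · exact Finset.prod_congr rfl fun i hi => by
      rw [h i (Finset.mem_sdiff.mp hi).1]

lemma Ew_insert {s : Finset ι} {a : ι} (ha : a ∉ s) (p : ι → ℝ) (φ : Finset ι → ℝ) :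
    Ew (insert a s) p φ
      = p a * Ew s p (fun J => φ (insert a J)) + (1 - p a) * Ew s p φ := by
  classical
  rw [Ew, Finset.powerset_insert, Finset.sum_union]
  · have h1 : ∀ J ∈ s.powerset,
        φ J * ((∏ i ∈ J, p i) * ∏ i ∈ insert a s \ J, (1 - p i))
        = (1 - p a) * (φ J * ((∏ i ∈ J, p i) * ∏ i ∈ s \ J, (1 - p i))) := by
      intro J hJ
      rw [Finset.mem_powerset] at hJ
      have haJ : a ∉ J := fun h => ha (hJ h)
      have : insert a s \ J = insert a (s \ J) := by
        ext x
        simp only [Finset.mem_sdiff, Finset.mem_insert]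
        constructor
        · rintro ⟨h1 | h1, h2⟩
          · exact Or.inl h1
          · exact Or.inr ⟨h1, h2⟩
        · rintro (rfl | ⟨h1, h2⟩)
          · exact ⟨Or.inl rfl, haJ⟩
          · exact ⟨Or.inr h1, h2⟩
      rw [this, Finset.prod_insert (by simp [Finset.mem_sdiff, ha])]
      ring
    have h2 : ∑ J ∈ s.powerset.image (insert a),
        φ J * ((∏ i ∈ J, p i) * ∏ i ∈ insert a s \ J, (1 - p i))
        = ∑ J ∈ s.powerset,
          p a * (φ (insert a J) * ((∏ i ∈ J, p i) * ∏ i ∈ s \ J, (1 - p i))) := by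
      rw [Finset.sum_image]
      · refine Finset.sum_congr rfl fun J hJ => ?_
        rw [Finset.mem_powerset] at hJ
        have haJ : a ∉ J := fun h => ha (hJ h)
        have hset : insert a s \ insert a J = s \ J := by
          ext x
          simp only [Finset.mem_sdiff, Finset.mem_insert, not_or]
          constructor
          · rintro ⟨h1 | h1, h2, h3⟩
            · exact absurd h1 h2
            · exact ⟨h1, h3⟩
          · rintro ⟨h1, h2⟩
            exact ⟨Or.inr h1, fun h => ha (h ▸ h1), h2⟩
        rw [hset, Finset.prod_insert haJ]
        ring
      · intro J hJ K hK hJK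
        rw [Finset.mem_coe, Finset.mem_powerset] at hJ hK
        have : ∀ L : Finset ι, L ⊆ s → (insert a L).erase a = L := fun L hL =>
          Finset.erase_insert (fun h => ha (hL h))
        rw [← this J hJ, ← this K hK, hJK]
    rw [Finset.sum_congr rfl h1, h2, ← Finset.mul_sum, ← Finset.mul_sum]
    rw [Ew, Ew]
    ring
  · rw [Finset.disjoint_right]
    intro J hJ hJ'
    rw [Finset.mem_image] at hJ
    obtain ⟨K, hK, rfl⟩ := hJ
    rw [Finset.mem_powerset] at hJ'
    exact ha (hJ' (Finset.mem_insert_self a K))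

lemma Ew_const (s : Finset ι) (p : ι → ℝ) (c : ℝ) :
    Ew s p (fun _ => c) = c := by
  classical
  induction s using Finset.induction with
  | empty => simp [Ew_empty]
  | insert _ _ ha ih => rw [Ew_insert ha]; rw [ih]; ring

lemma Ew_add (s : Finset ι) (p : ι → ℝ) (φ ψ : Finset ι → ℝ) :
    Ew s p (fun J => φ J + ψ J) = Ew s p φ + Ew s p ψ := by
  simp only [Ew, add_mul, Finset.sum_add_distrib]

lemma Ew_sub (s : Finset ι) (p : ι → ℝ) (φ ψ : Finset ι → ℝ) :
    Ew s p (fun J => φ J - ψ J) = Ew s p φ - Ew s p ψ := by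
  simp only [Ew, sub_mul, Finset.sum_sub_distrib]

lemma Ew_mono (s : Finset ι) (p : ι → ℝ) (hp : ∀ i, 0 ≤ p i ∧ p i ≤ 1)
    (φ ψ : Finset ι → ℝ) (h : ∀ J ∈ s.powerset, φ J ≤ ψ J) :
    Ew s p φ ≤ Ew s p ψ := by
  refine Finset.sum_le_sum fun J hJ => ?_
  refine mul_le_mul_of_nonneg_right (h J hJ) ?_
  refine mul_nonneg (Finset.prod_nonneg fun i _ => (hp i).1)
    (Finset.prod_nonneg fun i _ => by linarith [(hp i).2])

lemma Ew_irrel {s : Finset ι} {a : ι} (ha : a ∉ s) (p : ι → ℝ) {φ : Finset ι → ℝ}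
    (h : ∀ J, φ (insert a J) = φ J) :
    Ew (insert a s) p φ = Ew s p φ := by
  rw [Ew_insert ha]
  have : Ew s p (fun J => φ (insert a J)) = Ew s p φ :=
    Ew_congr fun J _ => h J
  rw [this]; ring

lemma Ew_zero_coord {s : Finset ι} {a : ι} (ha : a ∉ s) {p : ι → ℝ}
    (hpa : p a = 0) (φ : Finset ι → ℝ) :
    Ew (insert a s) p φ = Ew s p φ := by
  rw [Ew_insert ha, hpa]; ring

lemma Ew_merge {s : Finset ι} {a b : ι} (ha : a ∉ s) (hb : b ∉ s) (hab : a ≠ b)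
    {p p' : ι → ℝ} {φ : Finset ι → ℝ}
    (h1 : ∀ J, φ (insert a J) = φ (insert b J))
    (h2 : ∀ J, φ (insert a (insert b J)) = φ (insert a J))
    (hp'a : p' a = 1 - (1 - p a) * (1 - p b))
    (hps : ∀ i ∈ s, p i = p' i) :
    Ew (insert a (insert b s)) p φ = Ew (insert a s) p' φ := by
  have hais : a ∉ insert b s := by simp [hab, ha]
  rw [Ew_insert hais, Ew_insert hb, Ew_insert hb, Ew_insert ha]
  have e2 : Ew s p (fun J => φ (insert a (insert b J))) = Ew s p (fun J => φ (insert a J)) :=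
    Ew_congr fun J _ => h2 J
  have e1 : Ew s p (fun J => φ (insert b J)) = Ew s p (fun J => φ (insert a J)) :=
    Ew_congr fun J _ => (h1 J).symm
  have e3 : Ew s p' (fun J => φ (insert a J)) = Ew s p (fun J => φ (insert a J)) :=
    (Ew_congr_p _ hps).symm
  have e4 : Ew s p' φ = Ew s p φ := (Ew_congr_p _ hps).symm
  rw [e2, e1, e3, e4, hp'a]
  ring

lemma Ew_prod (s : Finset ι) (p : ι → ℝ) (a : ι → ℝ) :
    Ew s p (fun J => ∏ i ∈ J, a i) = ∏ i ∈ s, (1 - p i + p i * a i) := by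
  classical
  induction s using Finset.induction with
  | empty => simp [Ew_empty]
  | @insert c s hc ih =>
    rw [Ew_insert hc]
    have : Ew s p (fun J => ∏ i ∈ insert c J, a i)
        = Ew s p (fun J => a c * ∏ i ∈ J, a i) := by
      refine Ew_congr fun J hJ => ?_
      rw [Finset.mem_powerset] at hJ
      rw [Finset.prod_insert (fun h => hc (hJ h))]
    rw [this]
    have : Ew s p (fun J => a c * ∏ i ∈ J, a i) = a c * Ew s p (fun J => ∏ i ∈ J, a i) := by
      simp only [Ew, Finset.mul_sum]; exact Finset.sum_congr rfl fun J _ => by ring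
    rw [this, ih, Finset.prod_insert hc]
    ring

lemma Ew_union_irrel (t : Finset ι) : ∀ (s : Finset ι), Disjoint t s →
    ∀ (p : ι → ℝ) (φ : Finset ι → ℝ), (∀ a ∈ t, ∀ J, φ (insert a J) = φ J) →
    Ew (t ∪ s) p φ = Ew s p φ := by
  classical
  induction t using Finset.induction with
  | empty => intro s _ p φ _; rw [Finset.empty_union]
  | @insert c t hc ih =>
    intro s hdisj p φ hφ
    have hcs : c ∉ t ∪ s := by
      simp only [Finset.mem_union, not_or]
      exact ⟨hc, Finset.disjoint_left.mp hdisj (Finset.mem_insert_self c t)⟩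
    rw [Finset.insert_union, Ew_irrel hcs p (hφ c (Finset.mem_insert_self c t))]
    exact ih s (Finset.disjoint_of_subset_left (Finset.subset_insert c t) hdisj) p φ
      (fun a ha J => hφ a (Finset.mem_insert_of_mem ha) J)

lemma Ew_union_zero (t : Finset ι) : ∀ (s : Finset ι), Disjoint t s →
    ∀ (p : ι → ℝ) (φ : Finset ι → ℝ), (∀ a ∈ t, p a = 0) →
    Ew (t ∪ s) p φ = Ew s p φ := by
  classical
  induction t using Finset.induction with
  | empty => intro s _ p φ _; rw [Finset.empty_union]
  | @insert c t hc ih =>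
    intro s hdisj p φ hp
    have hcs : c ∉ t ∪ s := by
      simp only [Finset.mem_union, not_or]
      exact ⟨hc, Finset.disjoint_left.mp hdisj (Finset.mem_insert_self c t)⟩
    rw [Finset.insert_union, Ew_zero_coord hcs (hp c (Finset.mem_insert_self c t)) φ]
    exact ih s (Finset.disjoint_of_subset_left (Finset.subset_insert c t) hdisj) p φ
      (fun a ha => hp a (Finset.mem_insert_of_mem ha))

lemma Ew_union_merge (t : Finset ι) (m : ι → ι) :
    ∀ (s : Finset ι) (p p' : ι → ℝ) (φ : Finset ι → ℝ),
    (∀ a ∈ t, a ∉ s) → (∀ a ∈ t, m a ∉ s) → (∀ a ∈ t, m a ∉ t) →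
    (∀ a ∈ t, ∀ b ∈ t, m a = m b → a = b) →
    (∀ a ∈ t, ∀ J, φ (insert a J) = φ (insert (m a) J)) →
    (∀ a ∈ t, ∀ J, φ (insert a (insert (m a) J)) = φ (insert a J)) →
    (∀ a ∈ t, p' a = 1 - (1 - p a) * (1 - p (m a))) →
    (∀ i ∈ s, p' i = p i) →
    Ew (t ∪ t.image m ∪ s) p φ = Ew (t ∪ s) p' φ := by
  classical
  induction t using Finset.induction with
  | empty => intro s p p' φ _ _ _ _ _ _ _ hp2; simp only [Finset.image_empty,
      Finset.empty_union]; exact (Ew_congr_p φ (fun i hi => (hp2 i hi).symm))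
  | @insert a t hat ih =>
    intro s p p' φ hd1 hd2 hd3 hinj hf1 hf2 hp1 hp2
    have hain : a ∈ insert a t := Finset.mem_insert_self a t
    have hmaa : m a ≠ a := fun h => (hd3 a hain) (by rw [h]; exact hain)
    have hmat : m a ∉ t := fun h => (hd3 a hain) (Finset.mem_insert_of_mem h)
    have hma_img : m a ∉ t.image m := by
      intro h
      rw [Finset.mem_image] at h
      obtain ⟨b, hb, hba⟩ := h
      have hab2 : a = b := hinj a hain b (Finset.mem_insert_of_mem hb) hba.symm
      cases hab2; exact hat hb
    have ha_img : a ∉ t.image m := by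
      intro h
      rw [Finset.mem_image] at h
      obtain ⟨b, hb, hba⟩ := h
      exact (hd3 b (Finset.mem_insert_of_mem hb)) (by rw [hba]; exact hain)
    have hseteq : insert a t ∪ (insert a t).image m ∪ s
        = insert a (insert (m a) (t ∪ t.image m ∪ s)) := by
      rw [Finset.image_insert]
      ext x
      simp only [Finset.mem_union, Finset.mem_insert]
      tauto
    have hanotin : a ∉ t ∪ t.image m ∪ s := by
      simp only [Finset.mem_union, not_or]
      exact ⟨⟨hat, ha_img⟩, hd1 a hain⟩
    have hmanotin : m a ∉ t ∪ t.image m ∪ s := by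
      simp only [Finset.mem_union, not_or]
      exact ⟨⟨hmat, hma_img⟩, hd2 a hain⟩
    set p'' : ι → ℝ := Function.update p a (1 - (1 - p a) * (1 - p (m a))) with hp''
    have hstep : Ew (insert a (insert (m a) (t ∪ t.image m ∪ s))) p φ
        = Ew (insert a (t ∪ t.image m ∪ s)) p'' φ := by
      refine Ew_merge hanotin hmanotin (fun h => hmaa h.symm) (hf1 a hain) (hf2 a hain) ?_ ?_
      · simp [hp'']
      · intro i hi
        have : i ≠ a := by
          rintro rfl
          exact hanotin hi
        simp [hp'', this]
    have hseteq2 : insert a (t ∪ t.image m ∪ s) = t ∪ t.image m ∪ insert a s := by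
      ext x
      simp only [Finset.mem_union, Finset.mem_insert]
      tauto
    have hIH : Ew (t ∪ t.image m ∪ insert a s) p'' φ = Ew (t ∪ insert a s) p' φ := by
      refine ih (insert a s) p'' p' φ ?_ ?_ ?_ ?_ ?_ ?_ ?_ ?_
      · intro b hb
        simp only [Finset.mem_insert, not_or]
        exact ⟨fun h => hat (h ▸ hb), hd1 b (Finset.mem_insert_of_mem hb)⟩
      · intro b hb
        simp only [Finset.mem_insert, not_or]
        constructor
        · intro h
          exact (hd3 b (Finset.mem_insert_of_mem hb)) (by rw [h]; exact hain)
        · exact hd2 b (Finset.mem_insert_of_mem hb)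
      · intro b hb h
        exact (hd3 b (Finset.mem_insert_of_mem hb)) (Finset.mem_insert_of_mem h)
      · intro b hb c hc
        exact hinj b (Finset.mem_insert_of_mem hb) c (Finset.mem_insert_of_mem hc)
      · intro b hb; exact hf1 b (Finset.mem_insert_of_mem hb)
      · intro b hb; exact hf2 b (Finset.mem_insert_of_mem hb)
      · intro b hb
        have hba : b ≠ a := fun h => hat (h ▸ hb)
        have hmba : m b ≠ a := fun h =>
          (hd3 b (Finset.mem_insert_of_mem hb)) (by rw [h]; exact hain)
        rw [hp1 b (Finset.mem_insert_of_mem hb)]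
        simp [hp'', hba, hmba]
      · intro i hi
        simp only [Finset.mem_insert] at hi
        rcases hi with rfl | hi
        · rw [hp1 i hain]; simp [hp'']
        · rw [hp2 i hi]
          have : i ≠ a := fun h => hd1 a hain (h ▸ hi)
          simp [hp'', this]
    have hseteq3 : t ∪ insert a s = insert a t ∪ s := by
      ext x
      simp only [Finset.mem_union, Finset.mem_insert]
      tauto
    rw [hseteq, hstep, hseteq2, hIH, hseteq3]

lemma Ew_harris (s : Finset ι) (p : ι → ℝ) (hp : ∀ i, 0 ≤ p i ∧ p i ≤ 1) :
    ∀ (e g : Finset ι → ℝ), (∀ J J' : Finset ι, J ⊆ J' → e J ≤ e J') →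
    (∀ J J' : Finset ι, J ⊆ J' → g J' ≤ g J) →
    Ew s p (fun J => e J * g J) ≤ Ew s p e * Ew s p g := by
  classical
  induction s using Finset.induction with
  | empty => intro e g _ _; simp [Ew_empty]
  | @insert a s ha ih =>
    intro e g he hg
    rw [Ew_insert ha, Ew_insert ha, Ew_insert ha]
    have hee : ∀ J J' : Finset ι, J ⊆ J' → e (insert a J) ≤ e (insert a J') :=
      fun J J' h => he _ _ (Finset.insert_subset_insert a h)
    have hgg : ∀ J J' : Finset ι, J ⊆ J' → g (insert a J') ≤ g (insert a J) :=
      fun J J' h => hg _ _ (Finset.insert_subset_insert a h)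
    have h1 := ih (fun J => e (insert a J)) (fun J => g (insert a J)) hee hgg
    have h2 := ih e g he hg
    have hE1 : Ew s p e ≤ Ew s p (fun J => e (insert a J)) :=
      Ew_mono s p hp _ _ (fun J _ => he J (insert a J) (Finset.subset_insert a J))
    have hG1 : Ew s p (fun J => g (insert a J)) ≤ Ew s p g :=
      Ew_mono s p hp _ _ (fun J _ => hg J (insert a J) (Finset.subset_insert a J))
    have hpa := hp a
    nlinarith [h1, h2, hE1, hG1, hpa.1, hpa.2,
      mul_nonneg (mul_nonneg hpa.1 (by linarith [hpa.2] : (0:ℝ) ≤ 1 - p a))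
        (mul_nonneg (sub_nonneg.mpr hE1) (sub_nonneg.mpr hG1))]

end RelaxAux

namespace RelaxAux

lemma extMulti_eq_Ew (f y : Finset α → ℝ) :
    extMulti f y = Ew Finset.univ y (fun J => f (J.sup id)) := by
  rw [extMulti, Ew, Finset.powerset_univ]
  refine Finset.sum_congr rfl fun J _ => ?_
  rw [Finset.compl_eq_univ_sdiff]

lemma sup_erase_insert (u : α) (T : Finset α) (J : Finset (Finset α)) :
    ((insert T J).sup id).erase u = T.erase u ∪ (J.sup id).erase u := by
  rw [Finset.sup_insert, id]
  ext x
  simp only [Finset.mem_erase, Finset.sup_eq_union, Finset.mem_union]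
  tauto

lemma erase_eq_comm (u : α) (S : Finset α) (hu : u ∉ S) (J : Finset (Finset α)) :
    ((insert S J).sup id).erase u = ((insert (insert u S) J).sup id).erase u := by
  rw [sup_erase_insert, sup_erase_insert, Finset.erase_insert hu,
    Finset.erase_eq_of_notMem hu]

lemma erase_eq_absorb (u : α) (S : Finset α) (hu : u ∉ S) (J : Finset (Finset α)) :
    ((insert S (insert (insert u S) J)).sup id).erase u = ((insert S J).sup id).erase u := by
  rw [sup_erase_insert, sup_erase_insert, sup_erase_insert, Finset.erase_insert hu,
    Finset.erase_eq_of_notMem hu, ← Finset.union_assoc, Finset.union_self]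

lemma erase_eq_empty_coord (u : α) (J : Finset (Finset α)) :
    ((insert ∅ J).sup id).erase u = (J.sup id).erase u := by
  rw [sup_erase_insert, Finset.erase_empty, Finset.empty_union]

lemma erase_eq_u_coord (u : α) (J : Finset (Finset α)) :
    ((insert {u} J).sup id).erase u = (J.sup id).erase u := by
  rw [sup_erase_insert, Finset.erase_singleton, Finset.empty_union]

/-- The coupling identity: the distribution of the union minus `u` is the same
under `y` and under `z`. -/
lemma Ew_coupling (u : α) (y z : Finset α → ℝ)
    (hz : ∀ S : Finset α, z S =
      if S = {u} then marg y u
      else if u ∈ S then 0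
      else if S = ∅ then y ∅
      else 1 - (1 - y S) * (1 - y (insert u S)))
    (ψ : Finset α → ℝ) :
    Ew Finset.univ y (fun J => ψ ((J.sup id).erase u))
      = Ew Finset.univ z (fun J => ψ ((J.sup id).erase u)) := by
  classical
  set P' : Finset (Finset α) := Finset.univ.filter (fun S : Finset α => u ∉ S) with hP'
  set P : Finset (Finset α) := Finset.univ.filter (fun S : Finset α => u ∉ S ∧ S ≠ ∅) with hP
  set Q : Finset (Finset α) := Finset.univ.filter (fun T : Finset α => u ∈ T ∧ T ≠ {u}) with hQ
  set r : Finset α → ℝ := fun S => 1 - (1 - y S) * (1 - y (insert u S)) with hr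
  set Ψ : Finset (Finset α) → ℝ := fun J => ψ ((J.sup id).erase u) with hΨ
  have hPmem : ∀ S : Finset α, S ∈ P ↔ (u ∉ S ∧ S ≠ ∅) := by
    intro S; simp [hP]
  have hP'mem : ∀ S : Finset α, S ∈ P' ↔ u ∉ S := by
    intro S; simp [hP']
  have hQmem : ∀ S : Finset α, S ∈ Q ↔ (u ∈ S ∧ S ≠ {u}) := by
    intro S; simp [hQ]
  -- the y side
  have hy1 : Finset.univ = P' ∪ P'.image (insert u) ∪ (∅ : Finset (Finset α)) := by
    ext S
    simp only [Finset.mem_univ, Finset.union_empty, Finset.mem_union, Finset.mem_image,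
      hP'mem, true_iff]
    by_cases h : u ∈ S
    · right
      exact ⟨S.erase u, Finset.notMem_erase u S, Finset.insert_erase h⟩
    · left; exact h
  have hyside : Ew Finset.univ y Ψ = Ew P' r Ψ := by
    rw [hy1, Ew_union_merge P' (insert u) ∅ y r Ψ]
    · rw [Finset.union_empty]
    · intro a _; exact Finset.notMem_empty a
    · intro a _; exact Finset.notMem_empty _
    · intro a ha h
      rw [hP'mem] at h
      exact h (Finset.mem_insert_self u a)
    · intro a ha b hb h
      rw [hP'mem] at ha hb
      rw [← Finset.erase_insert ha, h, Finset.erase_insert hb]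
    · intro a ha J
      rw [hP'mem] at ha
      simp only [hΨ]
      rw [erase_eq_comm u a ha J]
    · intro a ha J
      rw [hP'mem] at ha
      simp only [hΨ]
      rw [erase_eq_absorb u a ha J]
    · intro a _; rfl
    · intro i hi; exact absurd hi (Finset.notMem_empty i)
  have hP'P : P' = insert ∅ P := by
    ext S
    rw [hP'mem, Finset.mem_insert, hPmem]
    by_cases h : S = ∅
    · simp [h]
    · simp [h]
  have hnotP : (∅ : Finset α) ∉ P := by rw [hPmem]; simp
  have hyside2 : Ew P' r Ψ = Ew P r Ψ := by
    rw [hP'P]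
    refine Ew_irrel hnotP r ?_
    intro J
    simp only [hΨ]
    rw [erase_eq_empty_coord]
  -- the z side
  have hz1 : Finset.univ = Q ∪ insert {u} (insert ∅ P) := by
    ext S
    simp only [Finset.mem_univ, Finset.mem_union, Finset.mem_insert, hQmem, hPmem, true_iff]
    by_cases h1 : u ∈ S
    · by_cases h2 : S = {u}
      · right; left; exact h2
      · left; exact ⟨h1, h2⟩
    · by_cases h3 : S = ∅
      · right; right; left; exact h3
      · right; right; right; exact ⟨h1, h3⟩
  have hdisj : Disjoint Q (insert {u} (insert ∅ P)) := by
    rw [Finset.disjoint_left]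
    intro T hT hT'
    rw [hQmem] at hT
    rw [Finset.mem_insert, Finset.mem_insert, hPmem] at hT'
    rcases hT' with h | h | h
    · exact hT.2 h
    · rw [h] at hT; exact absurd hT.1 (Finset.notMem_empty u)
    · exact h.1 hT.1
  have hunotP : ({u} : Finset α) ∉ insert ∅ P := by
    rw [Finset.mem_insert, hPmem]
    push_neg
    constructor
    · exact Finset.singleton_nonempty u
    · intro h; exact absurd (Finset.mem_singleton_self u) h
  have hzside : Ew Finset.univ z Ψ = Ew P z Ψ := by
    rw [hz1, Ew_union_zero Q (insert {u} (insert ∅ P)) hdisj z Ψ]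
    · rw [Ew_irrel hunotP z (fun J => by simp only [hΨ]; rw [erase_eq_u_coord]),
        Ew_irrel hnotP z (fun J => by simp only [hΨ]; rw [erase_eq_empty_coord])]
    · intro T hT
      rw [hQmem] at hT
      rw [hz T, if_neg hT.2, if_pos hT.1]
  have hzr : Ew P z Ψ = Ew P r Ψ := by
    refine Ew_congr_p Ψ ?_
    intro S hS
    rw [hPmem] at hS
    have hSu : S ≠ {u} := fun h => hS.1 (h ▸ Finset.mem_singleton_self u)
    rw [hz S, if_neg hSu, if_neg hS.1, if_neg hS.2]
  rw [hyside, hyside2, hzside, hzr]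

lemma sup_insert_empty (J : Finset (Finset α)) :
    (insert (∅ : Finset α) J).sup id = J.sup id := by
  simp

/-- The probability that the union contains `u` equals `marg y u`. -/
lemma Ew_indicator (u : α) (y : Finset α → ℝ) :
    Ew Finset.univ y (fun J => if u ∈ J.sup id then (1:ℝ) else 0) = marg y u := by
  classical
  have hpt : ∀ J : Finset (Finset α),
      (if u ∈ J.sup id then (1:ℝ) else 0)
        = 1 - ∏ T ∈ J, (if u ∈ T then (0:ℝ) else 1) := by
    intro J
    by_cases h : u ∈ J.sup id
    · rw [if_pos h]
      rw [Finset.mem_sup] at h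
      obtain ⟨T, hT, huT⟩ := h
      have h0 : (∏ T ∈ J, if u ∈ T then (0:ℝ) else 1) = 0 :=
        Finset.prod_eq_zero hT (if_pos huT)
      rw [h0]; ring
    · rw [if_neg h]
      have h1 : (∏ T ∈ J, if u ∈ T then (0:ℝ) else 1) = 1 :=
        Finset.prod_eq_one fun T hT => if_neg fun huT =>
          h (Finset.mem_sup.mpr ⟨T, hT, huT⟩)
      rw [h1]; ring
  rw [Ew_congr fun J _ => hpt J, Ew_sub, Ew_const, Ew_prod, marg]
  congr 1
  rw [Finset.prod_filter]
  refine Finset.prod_congr rfl fun T _ => ?_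
  by_cases h : u ∈ T
  · rw [if_pos h, if_pos h]; ring
  · rw [if_neg h, if_neg h]; ring

end RelaxAux

theorem relax_properties (f : Finset α → ℝ)
    (y : Finset α → ℝ) (hy : ∀ S, 0 ≤ y S ∧ y S ≤ 1) (u : α)
    (z : Finset α → ℝ)
    (hz : ∀ S : Finset α, z S =
      if S = {u} then marg y u
      else if u ∈ S then 0
      else if S = ∅ then y ∅
      else 1 - (1 - y S) * (1 - y (insert u S))) :
    marg z = marg y ∧
    ((∀ S, 0 ≤ f S) →
      (∀ S T : Finset α, f (S ∪ T) + f (S ∩ T) ≤ f S + f T) →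
      extMulti f y ≤ extMulti f z) := by
  classical
  open RelaxAux in
  have hzu : z ({u} : Finset α) = marg y u := by rw [hz]; simp
  constructor
  · funext v
    by_cases hv : v = u
    · subst hv
      have h1 : ∏ S ∈ Finset.univ.filter (fun S : Finset α => v ∈ S), (1 - z S)
          = 1 - z {v} := by
        refine Finset.prod_eq_single_of_mem ({v} : Finset α) (Finset.mem_filter.mpr ⟨Finset.mem_univ _, Finset.mem_singleton_self v⟩) ?_
        intro S hS hSne
        rw [Finset.mem_filter] at hS
        rw [hz S, if_neg hSne, if_pos hS.2]
        ring
      simp only [marg]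
      rw [h1, hzu, marg]
      ring
    · set Av : Finset (Finset α) :=
        Finset.univ.filter (fun S : Finset α => v ∈ S ∧ u ∈ S) with hAv
      set Bv : Finset (Finset α) :=
        Finset.univ.filter (fun S : Finset α => v ∈ S ∧ u ∉ S) with hBv
      have hsplit : Finset.univ.filter (fun S : Finset α => v ∈ S) = Av ∪ Bv := by
        ext S; simp only [hAv, hBv, Finset.mem_filter, Finset.mem_union, Finset.mem_univ,
          true_and]; tauto
      have hdisj : Disjoint Av Bv := by
        rw [Finset.disjoint_left]
        intro S h1 h2
        simp only [hAv, hBv, Finset.mem_filter] at h1 h2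
        exact h2.2.2 h1.2.2
      have hA1 : ∏ S ∈ Av, (1 - z S) = 1 := by
        refine Finset.prod_eq_one fun S hS => ?_
        simp only [hAv, Finset.mem_filter] at hS
        have hSne : S ≠ {u} := fun h => hv (by
          rw [h] at hS; exact Finset.mem_singleton.mp hS.2.1)
        rw [hz S, if_neg hSne, if_pos hS.2.2]
        ring
      have hB : ∏ S ∈ Bv, (1 - z S)
          = (∏ S ∈ Bv, (1 - y S)) * ∏ S ∈ Bv, (1 - y (insert u S)) := by
        rw [← Finset.prod_mul_distrib]
        refine Finset.prod_congr rfl fun S hS => ?_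
        simp only [hBv, Finset.mem_filter] at hS
        have hSe : S ≠ ∅ := fun h => by
          rw [h] at hS; exact absurd hS.2.1 (Finset.notMem_empty v)
        have hSne : S ≠ {u} := fun h => hS.2.2 (h ▸ Finset.mem_singleton_self u)
        rw [hz S, if_neg hSne, if_neg hS.2.2, if_neg hSe]
        ring
      have hreindex : ∏ S ∈ Bv, (1 - y (insert u S)) = ∏ T ∈ Av, (1 - y T) := by
        refine Finset.prod_bij (fun S _ => insert u S) ?_ ?_ ?_ ?_
        · intro S hS
          simp only [hBv, Finset.mem_filter] at hS
          simp only [hAv, Finset.mem_filter]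
          exact ⟨Finset.mem_univ _, Finset.mem_insert_of_mem hS.2.1,
            Finset.mem_insert_self u S⟩
        · intro S hS S' hS' h
          simp only [hBv, Finset.mem_filter] at hS hS'
          have h' : insert u S = insert u S' := h
          rw [← Finset.erase_insert hS.2.2, h', Finset.erase_insert hS'.2.2]
        · intro T hT
          simp only [hAv, Finset.mem_filter] at hT
          refine ⟨T.erase u, ?_, ?_⟩
          · simp only [hBv, Finset.mem_filter]
            exact ⟨Finset.mem_univ _, Finset.mem_erase.mpr ⟨hv, hT.2.1⟩,
              Finset.notMem_erase u T⟩
          · show insert u (T.erase u) = T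
            rw [Finset.insert_erase hT.2.2]
        · intro S hS; rfl
      simp only [marg]
      rw [hsplit, Finset.prod_union hdisj, Finset.prod_union hdisj, hA1, hB, hreindex]
      ring
  · intro hf hsub
    set P : Finset (Finset α) :=
      Finset.univ.filter (fun S : Finset α => u ∉ S ∧ S ≠ ∅) with hP
    set Q : Finset (Finset α) :=
      Finset.univ.filter (fun T : Finset α => u ∈ T ∧ T ≠ {u}) with hQ
    have hPmem : ∀ S : Finset α, S ∈ P ↔ (u ∉ S ∧ S ≠ ∅) := by intro S; simp [hP]
    have hQmem : ∀ S : Finset α, S ∈ Q ↔ (u ∈ S ∧ S ≠ {u}) := by intro S; simp [hQ]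
    have hnotP : (∅ : Finset α) ∉ P := by rw [hPmem]; simp
    -- pointwise decomposition
    have hpt : ∀ (w : Finset α → ℝ), extMulti f w
        = Ew Finset.univ w (fun J => f ((J.sup id).erase u))
          + Ew Finset.univ w (fun J => (if u ∈ J.sup id then (1:ℝ) else 0) *
              (f (insert u ((J.sup id).erase u)) - f ((J.sup id).erase u))) := by
      intro w
      rw [extMulti_eq_Ew, ← Ew_add]
      refine Ew_congr fun J _ => ?_
      by_cases h : u ∈ J.sup id
      · rw [if_pos h, Finset.insert_erase h]; ring
      · rw [if_neg h, Finset.erase_eq_of_notMem h]; ring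
    -- coupling
    have hc1 : Ew Finset.univ y (fun J => f ((J.sup id).erase u))
        = Ew Finset.univ z (fun J => f ((J.sup id).erase u)) :=
      Ew_coupling u y z hz f
    have hc2 : Ew Finset.univ y
          (fun J => f (insert u ((J.sup id).erase u)) - f ((J.sup id).erase u))
        = Ew Finset.univ z
          (fun J => f (insert u ((J.sup id).erase u)) - f ((J.sup id).erase u)) :=
      Ew_coupling u y z hz (fun X => f (insert u X) - f X)
    -- the e-term under z
    have hWeq : insert ({u} : Finset α) (Finset.univ.erase {u}) = Finset.univ :=
      Finset.insert_erase (Finset.mem_univ _)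
    have hunotW : ({u} : Finset α) ∉ Finset.univ.erase ({u} : Finset α) :=
      Finset.notMem_erase _ _
    have hWQ : Finset.univ.erase ({u} : Finset α) = Q ∪ insert ∅ P := by
      ext S
      simp only [Finset.mem_erase, Finset.mem_univ, and_true, Finset.mem_union,
        Finset.mem_insert, hQmem, hPmem]
      by_cases h1 : u ∈ S
      · by_cases h2 : S = {u} <;> simp [h1, h2]
      · by_cases h3 : S = ∅
        · simp [h3]
        · have : S ≠ {u} := fun h => h1 (h ▸ Finset.mem_singleton_self u)
          simp [h1, h3, this]
    have hdisjQ : Disjoint Q (insert ∅ P) := by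
      rw [Finset.disjoint_left]
      intro T hT hT'
      rw [hQmem] at hT
      rw [Finset.mem_insert, hPmem] at hT'
      rcases hT' with h | h
      · rw [h] at hT; exact absurd hT.1 (Finset.notMem_empty u)
      · exact h.1 hT.1
    have hzQ : ∀ T ∈ Q, z T = 0 := by
      intro T hT
      rw [hQmem] at hT
      rw [hz T, if_neg hT.2, if_pos hT.1]
    have hterm2 : Ew (Finset.univ.erase ({u} : Finset α)) z
        (fun J => (if u ∈ J.sup id then (1:ℝ) else 0) *
          (f (insert u ((J.sup id).erase u)) - f ((J.sup id).erase u))) = 0 := by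
      rw [hWQ, Ew_union_zero Q (insert ∅ P) hdisjQ z _ hzQ,
        Ew_irrel hnotP z (fun J => by rw [sup_insert_empty])]
      have : Ew P z (fun J => (if u ∈ J.sup id then (1:ℝ) else 0) *
          (f (insert u ((J.sup id).erase u)) - f ((J.sup id).erase u)))
          = Ew P z (fun _ => (0:ℝ)) := by
        refine Ew_congr fun J hJ => ?_
        rw [Finset.mem_powerset] at hJ
        have hu : u ∉ J.sup id := by
          intro h
          rw [Finset.mem_sup] at h
          obtain ⟨T, hT, huT⟩ := h
          exact ((hPmem T).mp (hJ hT)).1 huT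
        rw [if_neg hu]; ring
      rw [this, Ew_const]
    have hterm1 : Ew (Finset.univ.erase ({u} : Finset α)) z
          (fun J => (if u ∈ (insert ({u} : Finset α) J).sup id then (1:ℝ) else 0) *
            (f (insert u (((insert ({u} : Finset α) J).sup id).erase u))
              - f (((insert ({u} : Finset α) J).sup id).erase u)))
        = Ew (Finset.univ.erase ({u} : Finset α)) z
          (fun J => f (insert u ((J.sup id).erase u)) - f ((J.sup id).erase u)) := by
      refine Ew_congr fun J _ => ?_
      have hu : u ∈ ((insert ({u} : Finset α) J).sup id) :=
        Finset.mem_sup.mpr ⟨{u}, Finset.mem_insert_self _ _, Finset.mem_singleton_self u⟩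
      rw [if_pos hu, one_mul, erase_eq_u_coord]
    have hγW : Ew Finset.univ z
          (fun J => f (insert u ((J.sup id).erase u)) - f ((J.sup id).erase u))
        = Ew (Finset.univ.erase ({u} : Finset α)) z
          (fun J => f (insert u ((J.sup id).erase u)) - f ((J.sup id).erase u)) := by
      conv_lhs => rw [← hWeq]
      rw [Ew_irrel hunotW z (fun J => by rw [erase_eq_u_coord])]
    have hEzsplit : Ew Finset.univ z
        (fun J => (if u ∈ J.sup id then (1:ℝ) else 0) *
          (f (insert u ((J.sup id).erase u)) - f ((J.sup id).erase u)))
        = marg y u * Ew Finset.univ z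
            (fun J => f (insert u ((J.sup id).erase u)) - f ((J.sup id).erase u)) := by
      rw [← hWeq, Ew_insert hunotW, hterm1, hterm2, hzu]
      rw [hWeq, hγW]
      ring
    -- Harris
    have hq_e : Ew Finset.univ y (fun J => if u ∈ J.sup id then (1:ℝ) else 0) = marg y u :=
      Ew_indicator u y
    have hmono : ∀ J J' : Finset (Finset α), J ⊆ J' →
        (if u ∈ J.sup id then (1:ℝ) else 0) ≤ (if u ∈ J'.sup id then (1:ℝ) else 0) := by
      intro J J' hJJ
      by_cases h : u ∈ J.sup id
      · have h' : u ∈ J'.sup id := by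
          rw [Finset.mem_sup] at h ⊢
          obtain ⟨T, hT, huT⟩ := h
          exact ⟨T, hJJ hT, huT⟩
        rw [if_pos h, if_pos h']
      · rw [if_neg h]
        by_cases h' : u ∈ J'.sup id <;> simp [h']
    have hanti : ∀ J J' : Finset (Finset α), J ⊆ J' →
        (f (insert u ((J'.sup id).erase u)) - f ((J'.sup id).erase u))
          ≤ (f (insert u ((J.sup id).erase u)) - f ((J.sup id).erase u)) := by
      intro J J' hJJ
      have hsup : J.sup id ⊆ J'.sup id := by
        intro x hx
        rw [Finset.mem_sup] at hx ⊢
        obtain ⟨T, hT, hxT⟩ := hx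
        exact ⟨T, hJJ hT, hxT⟩
      have hsubAA : (J.sup id).erase u ⊆ (J'.sup id).erase u :=
        Finset.erase_subset_erase u hsup
      have huA' : u ∉ (J'.sup id).erase u := Finset.notMem_erase u _
      have hun : insert u ((J.sup id).erase u) ∪ (J'.sup id).erase u
          = insert u ((J'.sup id).erase u) := by
        ext x
        simp only [Finset.mem_union, Finset.mem_insert]
        constructor
        · rintro ((rfl | hx) | hx)
          · exact Or.inl rfl
          · exact Or.inr (hsubAA hx)
          · exact Or.inr hx
        · rintro (rfl | hx)
          · exact Or.inl (Or.inl rfl)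
          · exact Or.inr hx
      have hin : insert u ((J.sup id).erase u) ∩ (J'.sup id).erase u
          = (J.sup id).erase u := by
        ext x
        simp only [Finset.mem_inter, Finset.mem_insert]
        constructor
        · rintro ⟨rfl | hx, hx'⟩
          · exact absurd hx' huA'
          · exact hx
        · intro hx
          exact ⟨Or.inr hx, hsubAA hx⟩
      have := hsub (insert u ((J.sup id).erase u)) ((J'.sup id).erase u)
      rw [hun, hin] at this
      linarith
    have hHarris := Ew_harris Finset.univ y hy
      (fun J => if u ∈ J.sup id then (1:ℝ) else 0)
      (fun J => f (insert u ((J.sup id).erase u)) - f ((J.sup id).erase u))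
      hmono hanti
    rw [hq_e] at hHarris
    rw [hpt y, hpt z, hEzsplit, ← hc1, ← hc2]
    linarith
end

section
/- Let A and B be two bases of a matroid M on a finite ground set N. Then there exists a bijection h : A ∖ B → B ∖ A such that for every u ∈ A ∖ B, the set (B ∖ {h(u)}) ∪ {u} is independent in M. -/
open scoped Classical

variable {α : Type*} [Fintype α] [DecidableEq α]

open Finset

/-! Hall's theorem applied to the bipartite graph joining `u ∈ A \ B` to every `v ∈ B \ A` with
`B - v + u` independent. For the Hall condition at `X ⊆ A \ B`, let `Y` be `A ∩ B` together with
the neighbours of `X`. If `X` had fewer neighbours than elements, the independent set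
`X ∪ (A ∩ B)` would be larger than the independent set `Y ⊆ B`, so some `w ∈ X` extends `Y`.
Augmenting `Y + w` to a set of size `|B|` inside `B + w` leaves out exactly one `v ∈ B \ Y`; then
`B - v + w` is independent, so `v` is a neighbour of `w` outside `Y`, which is absurd. -/

lemma exists_bijOn_of_card_le_card_biUnion {β : Type*} [DecidableEq β] {s t : Finset β}
    (r : β → Finset β) (hr : ∀ u ∈ s, r u ⊆ t) (hall : ∀ X ⊆ s, #X ≤ #(X.biUnion r))
    (hcard : #t ≤ #s) :
    ∃ h : β → β, Set.BijOn h s t ∧ ∀ u ∈ s, h u ∈ r u := by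
  have hall_subtype : ∀ X : Finset s, #X ≤ #(X.biUnion fun u => r u) := fun X => by
    rw [← card_image_of_injective X Subtype.val_injective, ← image_biUnion]
    exact hall _ fun _ hu => by
      obtain ⟨u, -, rfl⟩ := mem_image.1 hu
      exact u.2
  obtain ⟨f, hf_inj, hf_mem⟩ := (all_card_le_biUnion_card_iff_exists_injective _).1 hall_subtype
  set h : β → β := fun u => if hu : u ∈ s then f ⟨u, hu⟩ else u
  have h_mem : ∀ u ∈ s, h u ∈ r u := fun u hu => by simpa [h, hu] using hf_mem ⟨u, hu⟩
  have h_maps : Set.MapsTo h s t := fun u hu => hr u hu (h_mem u hu)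
  have h_inj : Set.InjOn h s := fun u hu v hv huv => by
    simp only [h, dif_pos (mem_coe.1 hu), dif_pos (mem_coe.1 hv)] at huv
    exact congrArg Subtype.val (hf_inj huv)
  exact ⟨h, ⟨h_maps, h_inj, surjOn_of_injOn_of_card_le h h_maps h_inj hcard⟩, h_mem⟩

namespace FinMatroid

variable {M : FinMatroid α} {A B I J Y : Finset α}

lemma Indep.card_le_of_isBase (hI : M.Indep I) (hB : M.IsBase B) : #I ≤ #B := by
  by_contra! h
  obtain ⟨w, hw, hwB⟩ := M.indep_exchange hB.1 hI h
  exact (mem_sdiff.1 hw).2 (hB.2 _ hwB (subset_insert w B) ▸ mem_insert_self w B)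

lemma IsBase.card_eq (hA : M.IsBase A) (hB : M.IsBase B) : #A = #B :=
  le_antisymm (hA.1.card_le_of_isBase hB) (hB.1.card_le_of_isBase hA)

lemma Indep.exists_augment (hI : M.Indep I) (hJ : M.Indep J) (hIJ : #I ≤ #J) :
    ∃ K, M.Indep K ∧ I ⊆ K ∧ K ⊆ I ∪ J ∧ #K = #J := by
  induction hn : #J - #I generalizing I with
  | zero => exact ⟨I, hI, subset_rfl, subset_union_left, by omega⟩
  | succ n ih =>
    obtain ⟨u, hu, huI⟩ := M.indep_exchange hI hJ (by omega)
    obtain ⟨huJ, hu_notin⟩ := mem_sdiff.1 hu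
    have hcard : #(insert u I) = #I + 1 := card_insert_of_notMem hu_notin
    obtain ⟨K, hK, hIK, hKIJ, hKJ⟩ := ih huI (by omega) (by omega)
    refine ⟨K, hK, (subset_insert u I).trans hIK, hKIJ.trans ?_, hKJ⟩
    rw [insert_union]
    exact insert_subset (mem_union_right I huJ) subset_rfl

lemma IsBase.exists_indep_insert_erase {u : α} (hB : M.IsBase B) (hYB : Y ⊆ B) (hu : u ∉ B)
    (hY : M.Indep (insert u Y)) : ∃ v ∈ B \ Y, M.Indep (insert u (B.erase v)) := by
  obtain ⟨K, hK, hYK, hKB, hKcard⟩ := hY.exists_augment hB.1 (hY.card_le_of_isBase hB)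
  have huK : u ∈ K := hYK (mem_insert_self u Y)
  obtain ⟨v, hvB, hvK⟩ : ∃ v ∈ B, v ∉ K := not_subset.1 fun hBK =>
    hu (eq_of_subset_of_card_le hBK hKcard.le ▸ huK)
  have hK_sub : K ⊆ insert u (B.erase v) := fun x hx => by
    have hx_ne : x ≠ v := fun hxv => hvK (hxv ▸ hx)
    rcases mem_union.1 (hKB hx) with hxY | hxB
    · rcases mem_insert.1 hxY with rfl | hxY
      · exact mem_insert_self x _
      · exact mem_insert_of_mem (mem_erase.2 ⟨hx_ne, hYB hxY⟩)
    · exact mem_insert_of_mem (mem_erase.2 ⟨hx_ne, hxB⟩)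
  have hcard : #(insert u (B.erase v)) = #B := by
    rw [card_insert_of_notMem fun h => hu (mem_of_mem_erase h), card_erase_of_mem hvB]
    have := card_pos.2 ⟨v, hvB⟩
    omega
  have hK_eq : K = insert u (B.erase v) := eq_of_subset_of_card_le hK_sub (by omega)
  exact ⟨v, mem_sdiff.2 ⟨hvB, fun hvY => hvK (hYK (mem_insert_of_mem hvY))⟩, hK_eq ▸ hK⟩

variable (M) in
noncomputable def exchangePartners (A B : Finset α) (u : α) : Finset α :=
  (B \ A).filter fun v => M.Indep (insert u (B.erase v))

lemma card_le_card_biUnion_exchangePartners {X : Finset α} (hA : M.IsBase A) (hB : M.IsBase B)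
    (hX : X ⊆ A \ B) : #X ≤ #(X.biUnion (M.exchangePartners A B)) := by
  set NX := X.biUnion (M.exchangePartners A B)
  have hNX : NX ⊆ B \ A := biUnion_subset.2 fun _ _ => filter_subset _ _
  have hXA : Disjoint X (A ∩ B) := disjoint_left.2 fun x hx hx' =>
    (mem_sdiff.1 (hX hx)).2 (mem_inter.1 hx').2
  have hYB : A ∩ B ∪ NX ⊆ B := union_subset inter_subset_right (hNX.trans sdiff_subset)
  have hXAB : M.Indep (X ∪ A ∩ B) := M.indep_subset hA.1 <|
    union_subset (hX.trans sdiff_subset) inter_subset_left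
  by_contra! hlt
  have hcard_lt : #(A ∩ B ∪ NX) < #(X ∪ A ∩ B) := by
    rw [card_union_of_disjoint hXA]
    have := card_union_le (A ∩ B) NX
    omega
  obtain ⟨w, hw, hwY⟩ := M.indep_exchange (M.indep_subset hB.1 hYB) hXAB hcard_lt
  obtain ⟨hwXAB, hw_notin⟩ := mem_sdiff.1 hw
  have hwX : w ∈ X := (mem_union.1 hwXAB).resolve_right fun h => hw_notin (mem_union_left _ h)
  obtain ⟨v, hv, hvw⟩ := hB.exists_indep_insert_erase hYB (mem_sdiff.1 (hX hwX)).2 hwY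
  obtain ⟨hvB, hv_notin⟩ := mem_sdiff.1 hv
  have hvA : v ∉ A := fun hvA => hv_notin (mem_union_left _ (mem_inter.2 ⟨hvA, hvB⟩))
  exact hv_notin <| mem_union_right _ <|
    mem_biUnion.2 ⟨w, hwX, mem_filter.2 ⟨mem_sdiff.2 ⟨hvB, hvA⟩, hvw⟩⟩

end FinMatroid

theorem base_exchange_bijection (M : FinMatroid α) (A B : Finset α)
    (hA : M.IsBase A) (hB : M.IsBase B) :
    ∃ h : α → α, Set.BijOn h ↑(A \ B) ↑(B \ A) ∧
      ∀ u ∈ A \ B, M.Indep (insert u (B.erase (h u))) := by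
  obtain ⟨h, h_bij, h_mem⟩ := exists_bijOn_of_card_le_card_biUnion (M.exchangePartners A B)
    (fun _ _ => filter_subset _ _)
    (fun _ hX => FinMatroid.card_le_card_biUnion_exchangePartners hA hB hX)
    (card_sdiff_comm (hB.card_eq hA)).le
  exact ⟨h, h_bij, fun u hu => (mem_filter.1 (h_mem u hu)).2⟩
end
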